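/- arXiv:2311.09927 — 5 statements merged into one kernel-verified Lean document; each statement's English description precedes it below -/
import Mathlib

section
/- Let T ⊆ (0,∞) be nonempty. Then R_T = +∞ if and only if there exists t ∈ (0,∞) such that T is a discrete subset of { t^q : q ∈ ℚ }. -/
open Set Filter Topology Pointwise

noncomputable section

/-- `T* = T ∪ T⁻¹ ∪ {1}` -/
def Tstar (T : Set ℝ) : Set ℝ := T ∪ (fun t => t⁻¹) '' T ∪ {1}

/-- `T_{γ₋,γ₊,n}`: products of `n` elements of `T*` whose partial products stay in `[γ₋,γ₊]`. -/
def TProdN (T : Set ℝ) (γm γp : ℝ) (n : ℕ) : Set ℝ :=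
  {x | ∃ t : Fin n → ℝ, (∀ i, t i ∈ Tstar T) ∧ x = ∏ i, t i ∧
    ∀ k : Fin n, (∏ i ∈ Finset.univ.filter (· ≤ k), t i) ∈ Icc γm γp}

/-- `T_{γ₋,γ₊} = ⋃_{n ≥ 1} T_{γ₋,γ₊,n}` -/
def TProd (T : Set ℝ) (γm γp : ℝ) : Set ℝ := ⋃ n ∈ {n : ℕ | 1 ≤ n}, TProdN T γm γp n

/-- `T_{γ₋,γ₊}` is dense in `[γ₋,γ₊]`. -/
def DenseInIcc (T : Set ℝ) (γm γp : ℝ) : Prop := Icc γm γp ⊆ closure (TProd T γm γp)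

/-- The limit ratio `R_T ∈ [1,∞]` (with `inf ∅ = ∞`). -/
def limitRatio (T : Set ℝ) : ENNReal :=
  sInf {r : ENNReal | ∃ γm γp : ℝ, γm ∈ Ioo (0:ℝ) 1 ∧ 1 < γp ∧ DenseInIcc T γm γp ∧
    r = ENNReal.ofReal (γp / γm)}

/-- sup of a set of reals, valued in `[0,∞]`. -/
def eSup (I : Set ℝ) : ENNReal := ⨆ x ∈ I, ENNReal.ofReal x

/-- inf of a set of reals, valued in `[0,∞]` (`= ∞` for `I = ∅`). -/
def eInf (I : Set ℝ) : ENNReal := ⨅ x ∈ I, ENNReal.ofReal x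

lemma prefixProd_eq_take {M : Type*} [CommMonoid M] (n : ℕ) (t : Fin n → M) (j : ℕ) (hj : j < n) :
    ∏ i ∈ Finset.univ.filter (fun i : Fin n => (i : ℕ) ≤ j), t i
      = ((List.ofFn t).take (j+1)).prod := by
  induction j with
  | zero =>
    have h1 : Finset.univ.filter (fun i : Fin n => (i : ℕ) ≤ 0) = {⟨0, hj⟩} := by
      ext i
      simp [Fin.ext_iff, Nat.le_zero]
    rw [h1, Finset.prod_singleton]
    have h2 : (0:ℕ) < (List.ofFn t).length := by simpa using hj
    rw [List.prod_take_succ _ _ h2]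
    simp
  | succ j ih =>
    have hj' : j < n := Nat.lt_of_succ_lt hj
    have h2 : j + 1 < (List.ofFn t).length := by simpa using hj
    rw [List.prod_take_succ _ _ h2]
    have h1 : Finset.univ.filter (fun i : Fin n => (i : ℕ) ≤ j + 1)
        = insert (⟨j+1, hj⟩ : Fin n) (Finset.univ.filter (fun i : Fin n => (i : ℕ) ≤ j)) := by
      ext i
      simp only [Finset.mem_filter, Finset.mem_univ, true_and, Finset.mem_insert, Fin.ext_iff]
      omega
    rw [h1, Finset.prod_insert (by simp), ih hj', mul_comm]
    simp

lemma filter_le_eq {n : ℕ} (k : Fin n) :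
    Finset.univ.filter (· ≤ k) = Finset.univ.filter (fun i : Fin n => (i : ℕ) ≤ (k : ℕ)) := by
  apply Finset.filter_congr
  intro i _
  exact Iff.rfl

/-- build a `TProd` element from a list -/
lemma list_mem_TProd (T : Set ℝ) (γm γp : ℝ) (m : List ℝ) (hm : m ≠ [])
    (hmem : ∀ y ∈ m, y ∈ Tstar T)
    (hpre : ∀ k, k < m.length → (m.take (k+1)).prod ∈ Icc γm γp) :
    m.prod ∈ TProd T γm γp := by
  have hn : 1 ≤ m.length := by
    cases m with
    | nil => exact absurd rfl hm
    | cons a l => simp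
  refine mem_iUnion₂.2 ⟨m.length, hn, ?_⟩
  refine ⟨fun i => m.get i, fun i => hmem _ (List.get_mem m _), ?_, ?_⟩
  · rw [← List.prod_ofFn]
    simp
  · intro k
    rw [filter_le_eq, prefixProd_eq_take _ _ _ k.isLt]
    have : List.ofFn m.get = m := List.ofFn_get m
    rw [this]
    exact hpre _ k.isLt

/-- analyze a TProd element -/
lemma TProd_subset_analysis (T : Set ℝ) (γm γp : ℝ) (hγm : 0 < γm) (hγm1 : γm ≤ 1)
    (hγp1 : 1 ≤ γp) {x : ℝ} (hx : x ∈ TProd T γm γp) :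
    ∃ m : List ℝ, m ≠ [] ∧ (∀ y ∈ m, y ∈ Tstar T ∩ Icc (γm/γp) (γp/γm)) ∧
      x = m.prod ∧ x ∈ Icc γm γp := by
  rcases mem_iUnion₂.1 hx with ⟨n, hn, t, htmem, hxval, hpart⟩
  have hn1 : 1 ≤ n := hn
  have hγp : 0 < γp := lt_of_lt_of_le hγm (hγm1.trans hγp1)
  set m : List ℝ := List.ofFn t with hmdef
  have hml : m.length = n := by simp [hmdef]
  have hpre : ∀ j, j < n → (m.take (j+1)).prod ∈ Icc γm γp := by
    intro j hj
    have := hpart ⟨j, hj⟩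
    rwa [filter_le_eq, prefixProd_eq_take _ _ _ hj] at this
  have hpre' : ∀ j, j ≤ n → (m.take j).prod ∈ Icc γm γp := by
    intro j hj
    cases j with
    | zero => simpa using ⟨hγm1, hγp1⟩
    | succ j => exact hpre j (by omega)
  have hxprod : x = m.prod := by
    rw [hxval, hmdef, List.prod_ofFn]
  have hxIcc : x ∈ Icc γm γp := by
    have hfull : Finset.univ.filter (· ≤ (⟨n-1, by omega⟩ : Fin n)) = Finset.univ := by
      ext i
      simp only [Finset.mem_filter, Finset.mem_univ, true_and, iff_true, Fin.le_def]
      have := i.isLt; omega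
    have := hpart ⟨n-1, by omega⟩
    rwa [hfull, ← hxval] at this
  refine ⟨m, ?_, ?_, hxprod, hxIcc⟩
  · intro h
    rw [h] at hml; simp at hml; omega
  · intro y hy
    rcases List.mem_iff_getElem.1 hy with ⟨j, hj, rfl⟩
    have hjn : j < n := by omega
    constructor
    · have : m[j] = t ⟨j, hjn⟩ := by simp [hmdef]
      rw [this]; exact htmem _
    · have hstep : (m.take (j+1)).prod = (m.take j).prod * m[j] :=
        List.prod_take_succ _ _ hj
      have h1 := hpre' j (le_of_lt hjn)
      have h2 := hpre j hjn
      have hP : 0 < (m.take j).prod := lt_of_lt_of_le hγm h1.1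
      have hmj : m[j] = (m.take (j+1)).prod / (m.take j).prod := by
        field_simp [hstep]
        rw [hstep]; ring
      rw [hmj]
      constructor
      · rw [div_le_div_iff₀ hγp hP]
        nlinarith [h1.2, h2.1]
      · rw [div_le_div_iff₀ hP hγm]
        nlinarith [h1.1, h2.2]

lemma list_sum_nonpos : ∀ (l : List ℝ), (∀ x ∈ l, x ≤ 0) → l.sum ≤ 0 := by
  intro l
  induction l with
  | nil => simp
  | cons a t iht =>
    intro h
    simp only [List.sum_cons]
    have := h a (by simp)
    have := iht (fun x hx => h x (by simp [hx]))
    linarith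

/-- Greedy rearrangement: any bounded list can be permuted so that all partial sums
stay within `[min 0 f - L, max 0 f + L]` where `f` is the final value. -/
lemma greedy_rearrange : ∀ (N : ℕ) (l : List ℝ) (L p : ℝ), l.length = N →
    (∀ x ∈ l, |x| ≤ L) →
    min 0 (p + l.sum) - L ≤ p → p ≤ max 0 (p + l.sum) + L →
    ∃ l' : List ℝ, l'.Perm l ∧ ∀ k : ℕ,
      min 0 (p + l.sum) - L ≤ p + (l'.take k).sum ∧
      p + (l'.take k).sum ≤ max 0 (p + l.sum) + L := by
  intro N
  induction N with
  | zero =>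
    intro l L p hlen hbd hlo hhi
    have : l = [] := List.eq_nil_of_length_eq_zero hlen
    subst this
    exact ⟨[], List.Perm.refl _, fun k => by
      simp only [List.take_nil, List.sum_nil, add_zero]
      simp only [List.sum_nil, add_zero] at hlo hhi
      exact ⟨hlo, hhi⟩⟩
  | succ N ih =>
    intro l L p hlen hbd hlo hhi
    set f := p + l.sum with hf
    have hlne : l ≠ [] := by intro h; rw [h] at hlen; simp at hlen
    -- pick an element y
    have hpick : ∃ y ∈ l, (p < f → 0 < y) ∧ (f ≤ p → y ≤ 0) := by
      rcases lt_or_ge p f with hpf | hpf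
      · have hsum : 0 < l.sum := by simp only [hf] at hpf; linarith
        have hex : ∃ y ∈ l, 0 < y := by
          by_contra hc
          push_neg at hc
          have : l.sum ≤ 0 := list_sum_nonpos l hc
          linarith
        rcases hex with ⟨y, hyl, hy⟩
        exact ⟨y, hyl, fun _ => hy, fun h => absurd hpf (not_lt.2 h)⟩
      · have hsum : l.sum ≤ 0 := by simp only [hf] at hpf; linarith
        have hex : ∃ y ∈ l, y ≤ 0 := by
          by_contra hc
          push_neg at hc
          have h0 : 0 < l.sum := by
            cases l with
            | nil => exact absurd rfl hlne
            | cons a t =>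
              have ha := hc a (by simp)
              have ht : 0 ≤ t.sum := List.sum_nonneg (fun x hx => le_of_lt (hc x (by simp [hx])))
              simp only [List.sum_cons]; linarith
          linarith
        rcases hex with ⟨y, hyl, hy⟩
        exact ⟨y, hyl, fun h => absurd h (not_lt.2 hpf), fun _ => hy⟩
    rcases hpick with ⟨y, hyl, hy⟩
    have hperm : l.Perm (y :: l.erase y) := List.perm_cons_erase hyl
    have hsum_erase : (l.erase y).sum = l.sum - y := by
      have := hperm.sum_eq
      simp only [List.sum_cons] at this
      linarith
    have hlen' : (l.erase y).length = N := by
      rw [List.length_erase_of_mem hyl, hlen]; rfl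
    have hbd' : ∀ x ∈ l.erase y, |x| ≤ L := fun x hx => hbd x (List.mem_of_mem_erase hx)
    have hyL : |y| ≤ L := hbd y hyl
    set p' := p + y with hp'
    have hf' : p' + (l.erase y).sum = f := by rw [hp', hsum_erase, hf]; ring
    have hL0 : 0 ≤ L := le_trans (abs_nonneg y) hyL
    -- p' satisfies invariant
    have hlo' : min 0 f - L ≤ p' := by
      rcases lt_or_ge p f with hpf | hpf
      · have := (hy.1 hpf); rw [hp']; linarith
      · have := (hy.2 hpf)
        have : p - L ≤ p' := by rw [hp']; have := abs_le.1 hyL; linarith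
        have hfmin : min 0 f ≤ f := min_le_right _ _
        linarith
    have hhi' : p' ≤ max 0 f + L := by
      rcases lt_or_ge p f with hpf | hpf
      · have hfmax : f ≤ max 0 f := le_max_right _ _
        have := abs_le.1 hyL
        rw [hp']; linarith
      · have := (hy.2 hpf); rw [hp']; linarith
    rcases ih (l.erase y) L p' hlen' hbd' (by rw [hf']; exact hlo') (by rw [hf']; exact hhi')
      with ⟨l₂, hl₂perm, hl₂⟩
    refine ⟨y :: l₂, ((hl₂perm.cons y).trans hperm.symm), fun k => ?_⟩
    cases k with
    | zero =>
      simp only [List.take_zero, List.sum_nil, add_zero]; exact ⟨hlo, hhi⟩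
    | succ k =>
      have := hl₂ k
      rw [hf'] at this
      simp only [List.take_succ_cons, List.sum_cons]
      constructor <;> [linarith [this.1]; linarith [this.2]]

lemma list_sum_neg : ∀ l : List ℝ, (l.map (fun z => -z)).sum = -l.sum := by
  intro l
  induction l with
  | nil => simp
  | cons a t iht => simp [iht]; ring

/-- Additive words: letters in `A`, all nonempty-prefix sums in `[a,b]`. -/
def IsWord (A : Set ℝ) (a b : ℝ) (l : List ℝ) : Prop :=
  (∀ x ∈ l, x ∈ A) ∧ ∀ k, k < l.length → (l.take (k+1)).sum ∈ Icc a b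

def Reach (A : Set ℝ) (a b : ℝ) : Set ℝ :=
  {x | ∃ l : List ℝ, l ≠ [] ∧ IsWord A a b l ∧ x = l.sum}

lemma reach_zero {A : Set ℝ} {a b : ℝ} (h0 : (0:ℝ) ∈ A) (ha : a ≤ 0) (hb : 0 ≤ b) :
    (0:ℝ) ∈ Reach A a b := by
  refine ⟨[0], by simp, ⟨by simp [h0], ?_⟩, by simp⟩
  intro k hk
  simp only [List.length_singleton] at hk
  interval_cases k
  simpa using ⟨ha, hb⟩

lemma reach_append {A : Set ℝ} {a b x : ℝ} (hx : x ∈ Reach A a b) (v : List ℝ)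
    (hv : ∀ y ∈ v, y ∈ A) (hvpre : ∀ k, k < v.length → x + (v.take (k+1)).sum ∈ Icc a b) :
    x + v.sum ∈ Reach A a b := by
  rcases hx with ⟨l, hlne, ⟨hlmem, hlpre⟩, rfl⟩
  refine ⟨l ++ v, by simp [hlne], ⟨?_, ?_⟩, by simp⟩
  · intro y hy
    rcases List.mem_append.1 hy with h | h
    · exact hlmem y h
    · exact hv y h
  · intro k hk
    rcases lt_or_ge k l.length with h | h
    · rw [List.take_append_of_le_length (by omega)]
      exact hlpre k h
    · have hk1 : l.length ≤ k + 1 := by omega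
      rw [List.take_append, List.take_of_length_le (by omega), List.sum_append]
      have hkv : k - l.length < v.length := by
        rw [List.length_append] at hk; omega
      have : k + 1 - l.length = (k - l.length) + 1 := by omega
      rw [this]
      exact hvpre _ hkv

lemma reach_neg {A : Set ℝ} {b x : ℝ} (hneg : ∀ y ∈ A, -y ∈ A)
    (hx : x ∈ Reach A (-b) b) : -x ∈ Reach A (-b) b := by
  rcases hx with ⟨l, hlne, ⟨hlmem, hlpre⟩, rfl⟩
  refine ⟨l.map (fun z => -z), by simpa using hlne, ⟨?_, ?_⟩, by rw [list_sum_neg]⟩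
  · intro y hy
    rcases List.mem_map.1 hy with ⟨z, hz, rfl⟩
    exact hneg z (hlmem z hz)
  · intro k hk
    rw [List.length_map] at hk
    rw [← List.map_take, list_sum_neg]
    have h := hlpre k hk
    exact ⟨by have := h.2; linarith, by have := h.1; linarith⟩

lemma reach_walk {A : Set ℝ} {L b δ : ℝ} (h0 : (0:ℝ) ∈ A) (hb : 2*L ≤ b) (hL : 0 < L)
    (w : List ℝ) (hwmem : ∀ y ∈ w, y ∈ A)
    (hwpre : ∀ k, k < w.length → (w.take (k+1)).sum ∈ Icc (-L) L)
    (hws : w.sum = δ) (hδ : 0 < δ) :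
    ∀ j : ℕ, (j : ℝ) * δ ≤ b - L → (j : ℝ) * δ ∈ Reach A (-b) b := by
  intro j
  induction j with
  | zero => intro _; simpa using reach_zero h0 (by linarith) (by linarith)
  | succ j ih =>
    intro hj
    have hjd : (j : ℝ) * δ ≤ b - L := by
      have : (j:ℝ) ≤ (j:ℝ) + 1 := by linarith
      push_cast at hj ⊢
      nlinarith
    have hx := ih hjd
    have : ((j:ℝ)+1) * δ = (j:ℝ)*δ + w.sum := by rw [hws]; ring
    push_cast
    rw [this]
    apply reach_append hx w hwmem
    intro k hk
    have hpre := hwpre k hk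
    have hjd0 : 0 ≤ (j:ℝ) * δ := by positivity
    constructor
    · have := hpre.1; linarith
    · have := hpre.2; linarith

lemma reach_climb {A : Set ℝ} {a b α x : ℝ} (hα : α ∈ A) (hα0 : 0 < α)
    (hx : x ∈ Reach A a b) (hxa : a ≤ x) :
    ∀ k : ℕ, x + (k:ℝ) * α ≤ b → x + (k:ℝ) * α ∈ Reach A a b := by
  intro k
  induction k with
  | zero => intro _; simpa using hx
  | succ k ih =>
    intro hk
    have hkb : x + (k:ℝ) * α ≤ b := by push_cast at hk ⊢; nlinarith
    have hx' := ih hkb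
    have heq : x + ((k:ℝ)+1) * α = (x + (k:ℝ)*α) + ([α] : List ℝ).sum := by simp; ring
    push_cast
    rw [heq]
    apply reach_append hx' [α] (by simpa using hα)
    intro j hj
    simp only [List.length_singleton] at hj
    interval_cases j
    simp only [List.take_succ_cons, List.take_zero, List.sum_cons, List.sum_nil, add_zero]
    constructor
    · have : (0:ℝ) ≤ (k:ℝ) * α := by positivity
      linarith
    · push_cast at hk; linarith

lemma reach_dense {A : Set ℝ} {L α : ℝ} (h0 : (0:ℝ) ∈ A) (hneg : ∀ y ∈ A, -y ∈ A)
    (hL : 1 ≤ L) (hα : α ∈ A) (hα0 : 0 < α) (hαL : α ≤ L)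
    (hsmall : ∀ ε, 0 < ε → ε < 1 → ∃ w : List ℝ, (∀ y ∈ w, y ∈ A) ∧
      (∀ k, k < w.length → (w.take (k+1)).sum ∈ Icc (-L) L) ∧ 0 < w.sum ∧ w.sum < ε) :
    Icc (-(3*L)) (3*L) ⊆ closure (Reach A (-(3*L)) (3*L)) := by
  have hL0 : 0 < L := by linarith
  have key : ∀ y, 0 ≤ y → y ≤ 3*L → ∀ ε, 0 < ε →
      ∃ r ∈ Reach A (-(3*L)) (3*L), y - ε < r ∧ r ≤ y := by
    intro y hy0 hy3 ε hε
    have hε' : 0 < min ε (1/2) := lt_min hε (by norm_num)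
    rcases hsmall (min ε (1/2)) hε' (lt_of_le_of_lt (min_le_right _ _) (by norm_num))
      with ⟨w, hwmem, hwpre, hδ0, hδε⟩
    set δ := w.sum with hδdef
    set k : ℕ := if y ≤ L then 0 else ⌈(y - L)/α⌉₊ with hkdef
    have hz1 : y - (k:ℝ)*α ≤ L := by
      by_cases hyL : y ≤ L
      · simp [hkdef, hyL]
      · simp only [hkdef, if_neg hyL]
        have h1 : (y - L)/α ≤ (⌈(y - L)/α⌉₊ : ℝ) := Nat.le_ceil _
        rw [div_le_iff₀ hα0] at h1
        linarith
    have hz0 : 0 ≤ y - (k:ℝ)*α := by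
      by_cases hyL : y ≤ L
      · simp only [hkdef, if_pos hyL, Nat.cast_zero, zero_mul, sub_zero]; exact hy0
      · simp only [hkdef, if_neg hyL]
        push_neg at hyL
        have hnn : 0 ≤ (y - L)/α := div_nonneg (by linarith) hα0.le
        have h1 : (⌈(y - L)/α⌉₊ : ℝ) < (y - L)/α + 1 := Nat.ceil_lt_add_one hnn
        have h2 : (⌈(y - L)/α⌉₊ : ℝ) * α < ((y - L)/α + 1) * α := by
          exact mul_lt_mul_of_pos_right h1 hα0
        rw [add_mul, div_mul_cancel₀ _ (ne_of_gt hα0)] at h2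
        linarith
    set z := y - (k:ℝ)*α with hzdef
    set j : ℕ := ⌊z/δ⌋₊ with hjdef
    have hjz : (j:ℝ)*δ ≤ z := by
      have := Nat.floor_le (by positivity : (0:ℝ) ≤ z/δ)
      rw [← le_div_iff₀ hδ0]
      exact this
    have hjz2 : z < ((j:ℝ)+1)*δ := by
      have := Nat.lt_floor_add_one (z/δ)
      rw [div_lt_iff₀ hδ0] at this
      push_cast at this ⊢
      linarith
    have hwalk : (j:ℝ)*δ ∈ Reach A (-(3*L)) (3*L) := by
      apply reach_walk h0 (by linarith) hL0 w hwmem hwpre rfl hδ0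
      linarith
    have hclimb : (j:ℝ)*δ + (k:ℝ)*α ∈ Reach A (-(3*L)) (3*L) := by
      have hj0 : (0:ℝ) ≤ (j:ℝ)*δ := by positivity
      apply reach_climb hα hα0 hwalk (by linarith)
      linarith
    refine ⟨(j:ℝ)*δ + (k:ℝ)*α, hclimb, ?_, by linarith⟩
    have hδε2 : δ < ε := lt_of_lt_of_le hδε (min_le_left _ _)
    linarith
  intro y hy
  rw [Metric.mem_closure_iff]
  intro ε hε
  rcases le_or_gt 0 y with hy0 | hy0
  · rcases key y hy0 hy.2 ε hε with ⟨r, hr, h1, h2⟩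
    exact ⟨r, hr, by rw [Real.dist_eq]; rw [abs_lt]; constructor <;> linarith⟩
  · have h1 : 0 ≤ -y := by linarith
    have h2 : -y ≤ 3*L := by have := hy.1; linarith
    rcases key (-y) h1 h2 ε hε with ⟨r, hr, h3, h4⟩
    refine ⟨-r, reach_neg hneg hr, ?_⟩
    rw [Real.dist_eq, abs_lt]
    constructor <;> linarith

lemma one_mem_Tstar (T : Set ℝ) : (1:ℝ) ∈ Tstar T := by
  right; rfl

lemma Tstar_pos {T : Set ℝ} (hT0 : T ⊆ Ioi 0) : ∀ y ∈ Tstar T, 0 < y := by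
  rintro y ((hy | ⟨z, hz, rfl⟩) | hy)
  · exact hT0 hy
  · exact inv_pos.2 (hT0 hz)
  · rw [mem_singleton_iff] at hy; rw [hy]; norm_num

lemma Tstar_inv {T : Set ℝ} {y : ℝ} (hy : y ∈ Tstar T) : y⁻¹ ∈ Tstar T := by
  rcases hy with ((hy | ⟨z, hz, rfl⟩) | hy)
  · exact Or.inl (Or.inr ⟨y, hy, rfl⟩)
  · rw [inv_inv]; exact Or.inl (Or.inl hz)
  · rw [mem_singleton_iff] at hy; rw [hy]; right; simp

lemma zero_mem_logTstar (T : Set ℝ) : (0:ℝ) ∈ Real.log '' Tstar T :=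
  ⟨1, one_mem_Tstar T, Real.log_one⟩

lemma neg_logTstar {T : Set ℝ} (hT0 : T ⊆ Ioi 0) :
    ∀ x ∈ Real.log '' Tstar T, -x ∈ Real.log '' Tstar T := by
  rintro x ⟨s, hs, rfl⟩
  exact ⟨s⁻¹, Tstar_inv hs, by rw [Real.log_inv]⟩

lemma exp_list_sum : ∀ l : List ℝ, (l.map Real.exp).prod = Real.exp l.sum := by
  intro l
  induction l with
  | nil => simp
  | cons a t iht => simp [iht, Real.exp_add]

lemma exp_reach {T : Set ℝ} (hT0 : T ⊆ Ioi 0) {γm γp x : ℝ} (hγm : 0 < γm) (hγp : 0 < γp)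
    (hx : x ∈ Reach (Real.log '' Tstar T) (Real.log γm) (Real.log γp)) :
    Real.exp x ∈ TProd T γm γp := by
  rcases hx with ⟨l, hlne, ⟨hlmem, hlpre⟩, rfl⟩
  have hprod : (l.map Real.exp).prod = Real.exp l.sum := exp_list_sum l
  rw [← hprod]
  apply list_mem_TProd _ _ _ _ (by simpa using hlne)
  · intro y hy
    rcases List.mem_map.1 hy with ⟨z, hz, rfl⟩
    rcases hlmem z hz with ⟨s, hs, rfl⟩
    rw [Real.exp_log (Tstar_pos hT0 s hs)]
    exact hs
  · intro k hk
    rw [List.length_map] at hk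
    rw [← List.map_take, exp_list_sum]
    have h := hlpre k hk
    constructor
    · rw [← Real.exp_log hγm]
      exact Real.exp_le_exp.2 h.1
    · rw [← Real.exp_log hγp]
      exact Real.exp_le_exp.2 h.2


lemma limitRatio_ne_top_of_data (T : Set ℝ) (hT0 : T ⊆ Ioi 0) (L α : ℝ)
    (hL : 1 ≤ L) (hα : α ∈ Real.log '' Tstar T) (hα0 : 0 < α) (hαL : α ≤ L)
    (hsmall : ∀ ε, 0 < ε → ε < 1 → ∃ w : List ℝ, (∀ y ∈ w, y ∈ Real.log '' Tstar T) ∧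
      (∀ k, k < w.length → (w.take (k+1)).sum ∈ Icc (-L) L) ∧ 0 < w.sum ∧ w.sum < ε) :
    limitRatio T ≠ ⊤ := by
  have hL0 : (0:ℝ) < L := by linarith
  set γm : ℝ := Real.exp (-(3*L)) with hγmdef
  set γp : ℝ := Real.exp (3*L) with hγpdef
  have hγm0 : 0 < γm := Real.exp_pos _
  have hγm1 : γm < 1 := by
    rw [hγmdef, ← Real.exp_zero]
    apply Real.exp_lt_exp.2; linarith
  have hγp1 : 1 < γp := by
    rw [hγpdef, ← Real.exp_zero]
    apply Real.exp_lt_exp.2; linarith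
  have hdense : DenseInIcc T γm γp := by
    intro y hy
    have hy0 : 0 < y := lt_of_lt_of_le hγm0 hy.1
    have hlog : Real.log y ∈ Icc (-(3*L)) (3*L) := by
      constructor
      · rw [hγmdef] at hy
        have := Real.log_le_log hγm0 hy.1
        rwa [Real.log_exp] at this
      · have := Real.log_le_log hy0 hy.2
        rwa [hγpdef, Real.log_exp] at this
    have hcl : Real.log y ∈ closure (Reach (Real.log '' Tstar T) (-(3*L)) (3*L)) :=
      reach_dense (zero_mem_logTstar T) (neg_logTstar hT0) hL hα hα0 hαL hsmall hlog
    have himg : Real.exp (Real.log y) ∈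
        closure (Real.exp '' Reach (Real.log '' Tstar T) (-(3*L)) (3*L)) :=
      image_closure_subset_closure_image Real.continuous_exp ⟨_, hcl, rfl⟩
    rw [Real.exp_log hy0] at himg
    refine closure_mono ?_ himg
    rintro z ⟨x, hx, rfl⟩
    apply exp_reach hT0 hγm0 (lt_trans one_pos hγp1)
    rwa [hγmdef, hγpdef, Real.log_exp, Real.log_exp]
  intro htop
  have hmem : ENNReal.ofReal (γp / γm) ∈
      {r : ENNReal | ∃ γm' γp' : ℝ, γm' ∈ Ioo (0:ℝ) 1 ∧ 1 < γp' ∧ DenseInIcc T γm' γp' ∧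
        r = ENNReal.ofReal (γp' / γm')} :=
    ⟨γm, γp, ⟨hγm0, hγm1⟩, hγp1, hdense, rfl⟩
  have := sInf_le hmem
  rw [limitRatio] at htop
  exact absurd this (not_le.2 (lt_of_lt_of_le ENNReal.ofReal_lt_top (le_of_eq htop.symm)))

lemma pre_two (x y a b : ℝ) (h1 : x ∈ Icc a b) (h2 : x + y ∈ Icc a b) :
    ∀ k, k < ([x, y] : List ℝ).length → (([x,y]).take (k+1)).sum ∈ Icc a b := by
  intro k hk
  simp only [List.length_cons, List.length_nil] at hk
  have : k = 0 ∨ k = 1 := by omega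
  rcases this with rfl | rfl
  · simpa using h1
  · simpa using h2

/-- data from an accumulation point -/
lemma data_of_accPt {T : Set ℝ} (hT0 : T ⊆ Ioi 0) {c : ℝ} (hc : 0 < c)
    (hacc : AccPt c (Filter.principal T)) :
    ∃ L α : ℝ, 1 ≤ L ∧ α ∈ Real.log '' Tstar T ∧ 0 < α ∧ α ≤ L ∧
      (∀ ε, 0 < ε → ε < 1 → ∃ w : List ℝ, (∀ y ∈ w, y ∈ Real.log '' Tstar T) ∧
        (∀ k, k < w.length → (w.take (k+1)).sum ∈ Icc (-L) L) ∧ 0 < w.sum ∧ w.sum < ε) := by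
  have hnear : ∀ ε, 0 < ε → ∃ u ∈ T, u ≠ c ∧ |u - c| < ε := by
    intro ε hε
    have := accPt_iff_nhds.1 hacc (Metric.ball c ε) (Metric.ball_mem_nhds c hε)
    rcases this with ⟨u, ⟨hub, huT⟩, hune⟩
    exact ⟨u, huT, hune, by simpa [Real.dist_eq] using hub⟩
  have hnear2 : ∀ ε, 0 < ε → ∃ u v : ℝ, u ∈ T ∧ v ∈ T ∧ u ≠ v ∧ |u - c| < ε ∧ |v - c| < ε := by
    intro ε hε
    rcases hnear ε hε with ⟨u, huT, hune, hud⟩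
    have h2 : 0 < |u - c| := abs_pos.2 (sub_ne_zero.2 hune)
    rcases hnear (min ε (|u - c|)) (lt_min hε h2) with ⟨v, hvT, hvne, hvd⟩
    refine ⟨u, v, huT, hvT, ?_, hud, lt_of_lt_of_le hvd (min_le_left _ _)⟩
    intro h
    rw [← h] at hvd
    exact absurd (lt_of_lt_of_le hvd (min_le_right _ _)) (lt_irrefl _)
  have hcont : ∀ ε, 0 < ε → ∃ d, 0 < d ∧ ∀ x : ℝ, |x - c| < d →
      |Real.log x - Real.log c| < ε := by
    intro ε hε
    have hcont := Real.continuousAt_log (ne_of_gt hc)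
    rw [Metric.continuousAt_iff] at hcont
    rcases hcont ε hε with ⟨d, hd, hcd⟩
    exact ⟨d, hd, fun x hx => by
      have := hcd (show dist x c < d by rwa [Real.dist_eq])
      rwa [Real.dist_eq] at this⟩
  have hloginj : ∀ u v : ℝ, u ∈ T → v ∈ T → u ≠ v → Real.log u ≠ Real.log v := by
    intro u v hu hv huv h
    exact huv (Real.log_injOn_pos (hT0 hu) (hT0 hv) h)
  set L : ℝ := |Real.log c| + 1 with hLdef
  have hL : 1 ≤ L := by
    have := abs_nonneg (Real.log c); rw [hLdef]; linarith
  have hεα : 0 < min 1 (if c = 1 then 1 else |Real.log c|) := by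
    apply lt_min one_pos
    split_ifs with h
    · norm_num
    · exact abs_pos.2 fun h0 => h (by
        have := Real.exp_log hc
        rw [h0, Real.exp_zero] at this
        exact this.symm)
  rcases hcont _ hεα with ⟨d, hd, hcd⟩
  rcases hnear d hd with ⟨u₀, hu₀T, hu₀ne, hu₀d⟩
  have hu₀log : Real.log u₀ ≠ 0 := by
    by_cases hc1 : c = 1
    · subst hc1
      intro h
      apply hu₀ne
      have := Real.exp_log (hT0 hu₀T)
      rw [h, Real.exp_zero] at this
      exact this.symm
    · intro h
      have := hcd u₀ hu₀d
      rw [h, zero_sub, abs_neg] at this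
      have h2 : min 1 (if c = 1 then 1 else |Real.log c|) ≤ |Real.log c| := by
        rw [if_neg hc1]; exact min_le_right _ _
      linarith
  set α := |Real.log u₀| with hαdef
  have hα0 : 0 < α := abs_pos.2 hu₀log
  have hαL : α ≤ L := by
    have := hcd u₀ hu₀d
    have h2 : |Real.log u₀| ≤ |Real.log c| + |Real.log u₀ - Real.log c| := by
      have := abs_sub_abs_le_abs_sub (Real.log u₀) (Real.log c)
      linarith [abs_nonneg (Real.log u₀ - Real.log c)]
    have h3 : min 1 (if c = 1 then 1 else |Real.log c|) ≤ 1 := min_le_left _ _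
    rw [hαdef, hLdef]; linarith
  have hu₀A : Real.log u₀ ∈ Real.log '' Tstar T := ⟨u₀, Or.inl (Or.inl hu₀T), rfl⟩
  have hαA : α ∈ Real.log '' Tstar T := by
    rcases le_or_gt 0 (Real.log u₀) with h | h
    · rw [hαdef, abs_of_nonneg h]; exact hu₀A
    · rw [hαdef, abs_of_neg h]; exact neg_logTstar hT0 _ hu₀A
  refine ⟨L, α, hL, hαA, hα0, hαL, ?_⟩
  intro ε hε hε1
  rcases hcont (ε/2) (by linarith) with ⟨d₁, hd₁, hcd₁⟩
  rcases hnear2 d₁ hd₁ with ⟨u, v, huT, hvT, huv, hud, hvd⟩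
  have hlogd : |Real.log u - Real.log v| < ε := by
    have h1 := hcd₁ u hud
    have h2 := hcd₁ v hvd
    have heq : Real.log u - Real.log v =
        (Real.log u - Real.log c) - (Real.log v - Real.log c) := by ring
    rw [heq]
    calc |(Real.log u - Real.log c) - (Real.log v - Real.log c)|
        ≤ |Real.log u - Real.log c| + |Real.log v - Real.log c| := abs_sub _ _
      _ < ε := by linarith
  have hlogne : Real.log u ≠ Real.log v := hloginj u v huT hvT huv
  have hbound : ∀ z ∈ T, |z - c| < d₁ → |Real.log z| ≤ L := by
    intro z hz hzd
    have h1 := hcd₁ z hzd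
    have h2 := abs_sub_abs_le_abs_sub (Real.log z) (Real.log c)
    rw [hLdef]
    linarith
  rcases lt_or_gt_of_ne hlogne with hlt | hgt
  · refine ⟨[Real.log v, -Real.log u], ?_, ?_, by simp; linarith, ?_⟩
    · intro y hy
      simp only [List.mem_cons, List.mem_singleton, List.not_mem_nil, or_false] at hy
      rcases hy with rfl | rfl
      · exact ⟨v, Or.inl (Or.inl hvT), rfl⟩
      · exact neg_logTstar hT0 _ ⟨u, Or.inl (Or.inl huT), rfl⟩
    · apply pre_two
      · have h2 := abs_le.1 (hbound v hvT hvd)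
        exact ⟨by linarith [h2.1], h2.2⟩
      · have h3 := abs_lt.1 hlogd
        constructor <;> [linarith; linarith]
    · simp only [List.sum_cons, List.sum_nil, add_zero]
      have := abs_lt.1 hlogd
      linarith
  · refine ⟨[Real.log u, -Real.log v], ?_, ?_, by simp; linarith, ?_⟩
    · intro y hy
      simp only [List.mem_cons, List.mem_singleton, List.not_mem_nil, or_false] at hy
      rcases hy with rfl | rfl
      · exact ⟨u, Or.inl (Or.inl huT), rfl⟩
      · exact neg_logTstar hT0 _ ⟨v, Or.inl (Or.inl hvT), rfl⟩
    · apply pre_two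
      · have h2 := abs_le.1 (hbound u huT hud)
        exact ⟨by linarith [h2.1], h2.2⟩
      · have h3 := abs_lt.1 hlogd
        constructor <;> [linarith; linarith]
    · simp only [List.sum_cons, List.sum_nil, add_zero]
      have := abs_lt.1 hlogd
      linarith

lemma replicate_sum_zsmul (m : ℤ) (x : ℝ) :
    (List.replicate m.natAbs (if 0 ≤ m then x else -x)).sum = (m : ℝ) * x := by
  rw [List.sum_replicate]
  rcases le_or_gt 0 m with h | h
  · rw [if_pos h, nsmul_eq_mul]
    congr 1
    rw [Nat.cast_natAbs]
    exact_mod_cast abs_of_nonneg h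
  · rw [if_neg (not_le.2 h), nsmul_eq_mul]
    have h3 : (m.natAbs : ℝ) = -(m : ℝ) := by
      rw [Nat.cast_natAbs]
      exact_mod_cast abs_of_neg h
    rw [h3]; ring

/-- data from two multiplicatively independent elements -/
lemma data_of_irrational {T : Set ℝ} (hT0 : T ⊆ Ioi 0) {a b : ℝ} (ha : a ∈ T) (hb : b ∈ T)
    (ha1 : a ≠ 1) (hbq : ∀ q : ℚ, b ≠ a ^ (q : ℝ)) :
    ∃ L α : ℝ, 1 ≤ L ∧ α ∈ Real.log '' Tstar T ∧ 0 < α ∧ α ≤ L ∧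
      (∀ ε, 0 < ε → ε < 1 → ∃ w : List ℝ, (∀ y ∈ w, y ∈ Real.log '' Tstar T) ∧
        (∀ k, k < w.length → (w.take (k+1)).sum ∈ Icc (-L) L) ∧ 0 < w.sum ∧ w.sum < ε) := by
  have ha0 : (0:ℝ) < a := hT0 ha
  have hb0 : (0:ℝ) < b := hT0 hb
  set p : ℝ := Real.log b with hpdef
  set q0 : ℝ := Real.log a with hq0def
  have hq0ne : q0 ≠ 0 := by
    intro h
    apply ha1
    have := Real.exp_log ha0
    rw [hq0def] at h
    rw [h, Real.exp_zero] at this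
    exact this.symm
  have hpne : p ≠ 0 := by
    intro h
    apply hbq 0
    rw [Rat.cast_zero, Real.rpow_zero]
    have := Real.exp_log hb0
    rw [hpdef] at h
    rw [h, Real.exp_zero] at this
    exact this.symm
  -- the subgroup generated by p and q0 is dense
  have hdense : Dense ((AddSubgroup.closure ({p, q0} : Set ℝ) : AddSubgroup ℝ) : Set ℝ) := by
    rcases AddSubgroup.dense_or_cyclic (AddSubgroup.closure ({p, q0} : Set ℝ)) with h | ⟨g, hg⟩
    · exact h
    · exfalso
      have hpmem : p ∈ AddSubgroup.closure ({p, q0} : Set ℝ) :=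
        AddSubgroup.subset_closure (by simp)
      have hqmem : q0 ∈ AddSubgroup.closure ({p, q0} : Set ℝ) :=
        AddSubgroup.subset_closure (by simp)
      rw [hg, AddSubgroup.mem_closure_singleton] at hpmem hqmem
      rcases hpmem with ⟨m, hm⟩
      rcases hqmem with ⟨n, hn⟩
      have hn0 : (n : ℝ) ≠ 0 := by
        intro h
        rw [zsmul_eq_mul, h, zero_mul] at hn
        exact hq0ne hn.symm
      apply hbq ((m : ℚ) / (n : ℚ))
      have hm' : (m:ℝ) * g = p := by rw [← hm, zsmul_eq_mul]
      have hn' : (n:ℝ) * g = q0 := by rw [← hn, zsmul_eq_mul]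
      have key : (n:ℝ) * p = (m:ℝ) * q0 := by
        calc (n:ℝ) * p = (n:ℝ) * ((m:ℝ) * g) := by rw [hm']
          _ = (m:ℝ) * ((n:ℝ) * g) := by ring
          _ = (m:ℝ) * q0 := by rw [hn']
      have h1 : ((((m:ℚ)/(n:ℚ)) : ℚ) : ℝ) = (m : ℝ) / (n : ℝ) := by push_cast; ring
      rw [Real.rpow_def_of_pos ha0]
      have hexp : Real.log a * ((((m:ℚ)/(n:ℚ)) : ℚ) : ℝ) = p := by
        rw [h1, ← hq0def]
        field_simp
        linarith [key]
      rw [hexp, hpdef, Real.exp_log hb0]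
  set L0 : ℝ := max |p| |q0| with hL0def
  have hL0p : |p| ≤ L0 := le_max_left _ _
  have hL0q : |q0| ≤ L0 := le_max_right _ _
  have hL0nn : 0 ≤ L0 := le_trans (abs_nonneg p) hL0p
  set L : ℝ := L0 + 1 with hLdef
  have hL : 1 ≤ L := by linarith
  have hpA : p ∈ Real.log '' Tstar T := ⟨b, Or.inl (Or.inl hb), rfl⟩
  have hqA : q0 ∈ Real.log '' Tstar T := ⟨a, Or.inl (Or.inl ha), rfl⟩
  have hαA : |p| ∈ Real.log '' Tstar T := by
    rcases le_or_gt 0 p with h | h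
    · rwa [abs_of_nonneg h]
    · rw [abs_of_neg h]; exact neg_logTstar hT0 _ hpA
  refine ⟨L, |p|, hL, hαA, abs_pos.2 hpne, by rw [hLdef]; linarith, ?_⟩
  intro ε hε hε1
  -- find small positive element of the subgroup
  have hopen : (Ioo (0:ℝ) ε).Nonempty := ⟨ε/2, by constructor <;> linarith⟩
  rcases dense_iff_inter_open.1 hdense (Ioo 0 ε) isOpen_Ioo hopen with ⟨g, hgIoo, hgG⟩
  rw [SetLike.mem_coe, AddSubgroup.mem_closure_pair] at hgG
  rcases hgG with ⟨m, n, hmn⟩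
  set l : List ℝ := List.replicate m.natAbs (if 0 ≤ m then p else -p) ++
      List.replicate n.natAbs (if 0 ≤ n then q0 else -q0) with hldef
  have hlsum : l.sum = g := by
    rw [hldef, List.sum_append, replicate_sum_zsmul, replicate_sum_zsmul]
    rw [← hmn, zsmul_eq_mul, zsmul_eq_mul]
  have hlmem : ∀ x ∈ l, x ∈ Real.log '' Tstar T := by
    intro x hx
    rw [hldef] at hx
    rcases List.mem_append.1 hx with h | h
    · have := List.eq_of_mem_replicate h
      rw [this]
      split_ifs
      · exact hpA
      · exact neg_logTstar hT0 _ hpA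
    · have := List.eq_of_mem_replicate h
      rw [this]
      split_ifs
      · exact hqA
      · exact neg_logTstar hT0 _ hqA
  have hlbd : ∀ x ∈ l, |x| ≤ L0 := by
    intro x hx
    rw [hldef] at hx
    rcases List.mem_append.1 hx with h | h
    · have := List.eq_of_mem_replicate h
      rw [this]
      split_ifs
      · exact hL0p
      · rwa [abs_neg]
    · have := List.eq_of_mem_replicate h
      rw [this]
      split_ifs
      · exact hL0q
      · rwa [abs_neg]
  have hg0 : 0 < g := hgIoo.1
  have hgε : g < ε := hgIoo.2
  rcases greedy_rearrange l.length l L0 0 rfl hlbd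
    (by simp only [hlsum, zero_add]; rw [min_eq_left (le_of_lt hg0)]; linarith)
    (by simp only [hlsum, zero_add]; rw [max_eq_right (le_of_lt hg0)]; linarith)
    with ⟨l', hperm, hbd⟩
  refine ⟨l', fun y hy => hlmem y (hperm.mem_iff.1 hy), ?_, ?_, ?_⟩
  · intro k hk
    have h := hbd (k+1)
    simp only [hlsum, zero_add] at h
    rw [min_eq_left (le_of_lt hg0), max_eq_right (le_of_lt hg0)] at h
    constructor
    · have := h.1; rw [hLdef]; linarith
    · have := h.2; rw [hLdef]; linarith
  · rw [hperm.sum_eq, hlsum]; exact hg0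
  · rw [hperm.sum_eq, hlsum]; exact hgε

lemma list_prod_zpow {s : ℝ} (hs : s ≠ 0) :
    ∀ l : List ℝ, (∀ y ∈ l, ∃ k : ℤ, y = s ^ k) → ∃ k : ℤ, l.prod = s ^ k := by
  intro l
  induction l with
  | nil => exact fun _ => ⟨0, by simp⟩
  | cons a tl ih =>
    intro h
    rcases h a (by simp) with ⟨k1, hk1⟩
    rcases ih (fun y hy => h y (by simp [hy])) with ⟨k2, hk2⟩
    exact ⟨k1 + k2, by rw [List.prod_cons, hk1, hk2, zpow_add₀ hs]⟩

lemma not_dense_of_rigid (T : Set ℝ) (hT0 : T ⊆ Ioi 0) (t : ℝ) (ht : 0 < t)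
    (hsub : T ⊆ {x : ℝ | ∃ q : ℚ, x = t ^ (q : ℝ)})
    (hdisc : ∀ x ∈ Ioi (0:ℝ), ¬ AccPt x (Filter.principal T))
    (γm γp : ℝ) (hγm : γm ∈ Ioo (0:ℝ) 1) (hγp : 1 < γp) :
    ¬ DenseInIcc T γm γp := by
  obtain ⟨hγm0, hγm1⟩ := hγm
  have hγp0 : (0:ℝ) < γp := lt_trans one_pos hγp
  intro hdense
  by_cases ht1 : t = 1
  · -- T = {1}
    have hT1 : ∀ x ∈ T, x = 1 := by
      intro x hx
      rcases hsub hx with ⟨q, hq⟩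
      rw [hq, ht1, Real.one_rpow]
    have hTs1 : ∀ y ∈ Tstar T, y = 1 := by
      rintro y ((hy | ⟨z, hz, rfl⟩) | hy)
      · exact hT1 y hy
      · rw [hT1 z hz]; norm_num
      · exact hy
    have hTP : TProd T γm γp ⊆ {1} := by
      intro x hx
      rcases TProd_subset_analysis T γm γp hγm0 (le_of_lt hγm1) (le_of_lt hγp) hx
        with ⟨m, hmne, hmem, hxprod, _⟩
      have : ∀ y ∈ m, y = 1 := fun y hy => hTs1 y (hmem y hy).1
      have hprod : m.prod = 1 := List.prod_eq_one this
      rw [mem_singleton_iff, hxprod, hprod]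
    have h1 : γm ∈ closure (TProd T γm γp) := hdense ⟨le_refl _, by linarith⟩
    have h2 : closure (TProd T γm γp) ⊆ {1} :=
      closure_minimal hTP isClosed_singleton
    exact absurd (h2 h1) (by simp; linarith)
  · set lo : ℝ := γm / γp with hlodef
    set hi : ℝ := γp / γm with hhidef
    have hlo0 : 0 < lo := div_pos hγm0 hγp0
    have hlogt : Real.log t ≠ 0 := Real.log_ne_zero_of_pos_of_ne_one ht ht1
    -- K is finite
    have hKfin : (T ∩ Icc lo hi).Finite := by
      by_contra hinf
      have hinf' : (T ∩ Icc lo hi).Infinite := hinf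
      rcases hinf'.exists_accPt_of_subset_isCompact isCompact_Icc inter_subset_right
        with ⟨x, hxIcc, hxacc⟩
      have hx0 : x ∈ Ioi (0:ℝ) := lt_of_lt_of_le hlo0 hxIcc.1
      exact hdisc x hx0 (hxacc.mono (principal_mono.2 inter_subset_left))
    -- the exponent set is finite
    have hinj : Function.Injective (fun q : ℚ => t ^ (q : ℝ)) := by
      intro q1 q2 h
      simp only at h
      have h2 : Real.log (t ^ (q1:ℝ)) = Real.log (t ^ (q2:ℝ)) := by rw [h]
      rw [Real.log_rpow ht, Real.log_rpow ht] at h2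
      have := mul_right_cancel₀ hlogt h2
      exact_mod_cast this
    set Qset : Set ℚ := {q : ℚ | t ^ (q:ℝ) ∈ T ∩ Icc lo hi} with hQdef
    have hQfin : Qset.Finite := hKfin.preimage hinj.injOn
    set N : ℕ := ∏ q ∈ hQfin.toFinset, q.den with hNdef
    have hN0 : 0 < N := Finset.prod_pos (fun q _ => q.pos)
    have hNne : (N:ℝ) ≠ 0 := by positivity
    have hNd : ∀ q ∈ Qset, q.den ∣ N := by
      intro q hq
      exact Finset.dvd_prod_of_mem _ (hQfin.mem_toFinset.2 hq)
    set s : ℝ := t ^ ((N:ℝ))⁻¹ with hsdef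
    have hs0 : 0 < s := Real.rpow_pos_of_pos ht _
    have hlogs : Real.log s ≠ 0 := by
      rw [hsdef, Real.log_rpow ht]
      exact mul_ne_zero (inv_ne_zero hNne) hlogt
    have hs1 : s ≠ 1 := by
      intro h
      rw [h, Real.log_one] at hlogs
      exact hlogs rfl
    have hsk : ∀ q ∈ Qset, t ^ (q:ℝ) = s ^ ((q.num * ((N / q.den : ℕ) : ℤ)) : ℤ) := by
      intro q hq
      set k : ℤ := q.num * ((N / q.den : ℕ) : ℤ) with hkdef
      have hden : ((q.den:ℝ)) ≠ 0 := by
        have := q.pos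
        positivity
      have hcast : ((N / q.den : ℕ) : ℝ) = (N : ℝ) / (q.den : ℝ) := by
        have h := Nat.div_mul_cancel (hNd q hq)
        field_simp
        exact_mod_cast h
      have hkR : (k:ℝ) = (q.num:ℝ) * ((N/q.den : ℕ):ℝ) := by
        rw [hkdef, Int.cast_mul, Int.cast_natCast]
      have hexp : (N:ℝ)⁻¹ * (k : ℝ) = (q : ℝ) := by
        rw [hkR, hcast, Rat.cast_def]
        field_simp
      rw [← hexp, Real.rpow_mul (le_of_lt ht), ← hsdef]
      exact Real.rpow_intCast s k
    -- every letter of a TProd word is an integer power of s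
    have hletters : ∀ y ∈ Tstar T ∩ Icc lo hi, ∃ k : ℤ, y = s ^ k := by
      rintro y ⟨((hy | ⟨z, hz, rfl⟩) | hy), hyIcc⟩
      · rcases hsub hy with ⟨q, rfl⟩
        exact ⟨_, hsk q ⟨hy, hyIcc⟩⟩
      · have hz0 : 0 < z := hT0 hz
        have hzz : z * z⁻¹ = 1 := mul_inv_cancel₀ (ne_of_gt hz0)
        have h1 : lo * hi = 1 := by
          rw [hlodef, hhidef]
          field_simp
        have hz1 : z⁻¹ ≤ hi := hyIcc.2
        have hz2 : lo ≤ z⁻¹ := hyIcc.1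
        have hzIcc : z ∈ Icc lo hi := by
          constructor
          · nlinarith
          · nlinarith
        rcases hsub hz with ⟨q, hq⟩
        have hqQ : q ∈ Qset := by
          have : t ^ (q:ℝ) ∈ T ∩ Icc lo hi := by rw [← hq]; exact ⟨hz, hzIcc⟩
          exact this
        refine ⟨-(q.num * ((N / q.den : ℕ) : ℤ)), ?_⟩
        rw [hq, hsk q hqQ, zpow_neg]
      · rw [mem_singleton_iff] at hy
        exact ⟨0, by rw [hy, zpow_zero]⟩
    -- TProd is contained in the powers of s
    have hTP : TProd T γm γp ⊆ {x : ℝ | ∃ k : ℤ, x = s ^ k} ∩ Icc γm γp := by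
      intro x hx
      rcases TProd_subset_analysis T γm γp hγm0 (le_of_lt hγm1) (le_of_lt hγp) hx
        with ⟨m, _, hmem, hxprod, hxIcc⟩
      refine ⟨?_, hxIcc⟩
      rcases list_prod_zpow (ne_of_gt hs0) m (fun y hy => hletters y (hmem y hy)) with ⟨k, hk⟩
      exact ⟨k, by rw [hxprod, hk]⟩
    -- the set of powers of s in the interval is finite
    have hFfin : ({x : ℝ | ∃ k : ℤ, x = s ^ k} ∩ Icc γm γp).Finite := by
      set B : ℝ := max |Real.log γm| |Real.log γp| with hBdef
      have habs : 0 < |Real.log s| := abs_pos.2 hlogs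
      set M : ℤ := ⌈B / |Real.log s|⌉ with hMdef
      apply Set.Finite.subset (Set.Finite.image (fun k : ℤ => s ^ k) (Set.finite_Icc (-M) M))
      rintro x ⟨⟨k, rfl⟩, hxIcc⟩
      refine ⟨k, ?_, rfl⟩
      have hx0 : (0:ℝ) < s ^ k := zpow_pos hs0 k
      have hlog1 : Real.log γm ≤ (k:ℝ) * Real.log s := by
        have := Real.log_le_log hγm0 hxIcc.1
        rwa [Real.log_zpow] at this
      have hlog2 : (k:ℝ) * Real.log s ≤ Real.log γp := by
        have := Real.log_le_log hx0 hxIcc.2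
        rwa [Real.log_zpow] at this
      have hbd : |(k:ℝ) * Real.log s| ≤ B := by
        rw [abs_le]
        constructor
        · have h1 : -B ≤ Real.log γm := by
            rw [hBdef]
            have := neg_abs_le (Real.log γm)
            have h2 : |Real.log γm| ≤ max |Real.log γm| |Real.log γp| := le_max_left _ _
            linarith
          linarith
        · have h1 : Real.log γp ≤ B := by
            rw [hBdef]
            have := le_abs_self (Real.log γp)
            have h2 : |Real.log γp| ≤ max |Real.log γm| |Real.log γp| := le_max_right _ _
            linarith
          linarith
      have hkbd : |(k:ℝ)| ≤ B / |Real.log s| := by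
        rw [abs_mul] at hbd
        rw [le_div_iff₀ habs]
        exact hbd
      have hM : |(k:ℝ)| ≤ (M:ℝ) := le_trans hkbd (Int.le_ceil _)
      have : |k| ≤ M := by exact_mod_cast (by rwa [← Int.cast_abs] at hM : ((|k|:ℤ):ℝ) ≤ (M:ℝ))
      rw [abs_le] at this
      exact ⟨this.1, this.2⟩
    -- contradiction with density
    have hIccInf : (Icc γm γp).Infinite := Set.Icc_infinite (lt_trans hγm1 hγp)
    rcases (hIccInf.diff hFfin).nonempty with ⟨z, hzIcc, hzF⟩
    have hz1 : z ∈ closure (TProd T γm γp) := hdense hzIcc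
    have hz2 : z ∈ ({x : ℝ | ∃ k : ℤ, x = s ^ k} ∩ Icc γm γp) := by
      have := closure_minimal hTP hFfin.isClosed
      exact this hz1
    exact hzF hz2


theorem stmt11 (T : Set ℝ) (hT : T.Nonempty) (hT0 : T ⊆ Ioi 0) :
    limitRatio T = ⊤ ↔
      ∃ t : ℝ, 0 < t ∧ T ⊆ {x : ℝ | ∃ q : ℚ, x = t ^ (q : ℝ)} ∧
        ∀ x ∈ Ioi (0:ℝ), ¬ AccPt x (Filter.principal T) := by
  constructor
  · intro htop
    by_contra hnot
    by_cases hacc : ∃ x ∈ Ioi (0:ℝ), AccPt x (Filter.principal T)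
    · rcases hacc with ⟨c, hc, haccc⟩
      rcases data_of_accPt hT0 hc haccc with ⟨L, α, h1, h2, h3, h4, h5⟩
      exact limitRatio_ne_top_of_data T hT0 L α h1 h2 h3 h4 h5 htop
    · push_neg at hacc
      have hex : ∃ a ∈ T, a ≠ 1 := by
        by_contra h
        push_neg at h
        exact hnot ⟨1, one_pos,
          fun x hx => ⟨0, by rw [h x hx, Rat.cast_zero, Real.rpow_zero]⟩, hacc⟩
      rcases hex with ⟨a, haT, ha1⟩
      have hnsub : ¬ T ⊆ {x : ℝ | ∃ q : ℚ, x = a ^ (q:ℝ)} := by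
        intro hsub
        exact hnot ⟨a, hT0 haT, hsub, hacc⟩
      rcases not_subset.1 hnsub with ⟨b, hbT, hbq⟩
      have hbq' : ∀ q : ℚ, b ≠ a ^ (q:ℝ) := by
        intro q hq
        exact hbq ⟨q, hq⟩
      rcases data_of_irrational hT0 haT hbT ha1 hbq' with ⟨L, α, h1, h2, h3, h4, h5⟩
      exact limitRatio_ne_top_of_data T hT0 L α h1 h2 h3 h4 h5 htop
  · rintro ⟨t, ht, hsub, hdisc⟩
    rw [limitRatio, sInf_eq_top]
    rintro r ⟨γm, γp, hγm, hγp, hdense, rfl⟩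
    exact absurd hdense (not_dense_of_rigid T hT0 t ht hsub hdisc γm γp hγm hγp)
end
end

section
/- If T is a discrete subset of { t^q : q ∈ ℚ } for some t ∈ (0,∞), then for every ϑ > 1 there exists t_ϑ > 0 such that (ϑ⁻¹, ϑ) ∩ T* ⊆ { t_ϑ^n : n ∈ ℤ }, and consequently T_{ϑ⁻¹,ϑ} is not dense in [ϑ⁻¹,ϑ]. -/
open Set Filter Topology Pointwise

noncomputable section

theorem stmt12 (T : Set ℝ) (hT0 : T ⊆ Ioi 0) (t : ℝ) (ht : 0 < t)
    (hsub : T ⊆ {x : ℝ | ∃ q : ℚ, x = t ^ (q : ℝ)})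
    (hdisc : ∀ x ∈ Ioi (0:ℝ), ¬ AccPt x (Filter.principal T)) :
    ∀ ϑ : ℝ, 1 < ϑ → ∃ tϑ : ℝ, 0 < tϑ ∧
      Ioo ϑ⁻¹ ϑ ∩ Tstar T ⊆ {x : ℝ | ∃ n : ℤ, x = tϑ ^ n} ∧
      ¬ DenseInIcc T ϑ⁻¹ ϑ := by
  classical
  intro ϑ hϑ
  have hϑ0 : (0:ℝ) < ϑ := lt_trans one_pos hϑ
  have hϑi : ϑ⁻¹ < 1 := inv_lt_one_of_one_lt₀ hϑ
  have hϑi0 : 0 < ϑ⁻¹ := inv_pos.2 hϑ0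
  -- members of `Tstar T` are positive
  have hTs0 : Tstar T ⊆ Ioi 0 := by
    rintro x ((hx | ⟨y, hy, rfl⟩) | rfl)
    · exact hT0 hx
    · exact inv_pos.2 (Set.mem_Ioi.1 (hT0 hy))
    · exact Set.mem_Ioi.2 one_pos
  -- members of `Tstar T` are rational powers of `t`
  have hTsq : ∀ x ∈ Tstar T, ∃ q : ℚ, x = t ^ (q : ℝ) := by
    rintro x ((hx | ⟨y, hy, rfl⟩) | rfl)
    · exact hsub hx
    · obtain ⟨r, hr⟩ := hsub hy
      refine ⟨-r, ?_⟩
      show y⁻¹ = t ^ ((-r : ℚ) : ℝ)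
      rw [hr]; push_cast; rw [Real.rpow_neg ht.le]
    · exact ⟨0, by simp⟩
  by_cases ht1 : t = 1
  · -- degenerate case `t = 1`
    have hT1 : ∀ x ∈ Tstar T, x = 1 := by
      intro x hx
      obtain ⟨q, hq⟩ := hTsq x hx
      rw [hq, ht1, Real.one_rpow]
    refine ⟨2, two_pos, ?_, ?_⟩
    · rintro x ⟨_, hxT⟩
      refine ⟨0, ?_⟩
      rw [hT1 x hxT, zpow_zero]
    · intro hdense
      have hsub1 : TProd T ϑ⁻¹ ϑ ⊆ {1} := by
        intro x hx
        simp only [TProd, mem_iUnion, mem_setOf_eq] at hx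
        obtain ⟨n, hn, f, hf, hxeq, _⟩ := hx
        have : x = 1 := by
          rw [hxeq]; exact Finset.prod_eq_one fun i _ => hT1 _ (hf i)
        simp [this]
      have h1 : ϑ ∈ closure (TProd T ϑ⁻¹ ϑ) :=
        hdense ⟨le_of_lt (hϑi.trans hϑ), le_refl _⟩
      have h2 : ϑ ∈ ({1} : Set ℝ) := by
        have := closure_mono hsub1 h1
        rwa [closure_singleton] at this
      exact (ne_of_gt hϑ) (mem_singleton_iff.1 h2)
  -- main case `t ≠ 1`
  set K : Set ℝ := Icc ((ϑ*ϑ)⁻¹) (ϑ*ϑ) with hK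
  have hϑϑ0 : (0:ℝ) < ϑ*ϑ := mul_pos hϑ0 hϑ0
  have hIccK : Icc ϑ⁻¹ ϑ ⊆ K := by
    apply Icc_subset_Icc
    · exact inv_anti₀ hϑ0 (le_mul_of_one_le_left hϑ0.le hϑ.le)
    · exact le_mul_of_one_le_left hϑ0.le hϑ.le
  -- finiteness of T ∩ K
  have hTK : (T ∩ K).Finite := by
    by_contra hinf
    obtain ⟨x, hxK, hacc⟩ :=
      Set.Infinite.exists_accPt_of_subset_isCompact hinf isCompact_Icc inter_subset_right
    have hx0 : x ∈ Ioi (0:ℝ) := lt_of_lt_of_le (inv_pos.2 hϑϑ0) hxK.1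
    exact hdisc x hx0 (hacc.mono (principal_mono.2 inter_subset_left))
  -- finiteness of Tstar T ∩ K
  have hFfin : (Tstar T ∩ K).Finite := by
    apply Set.Finite.subset (((hTK.union (hTK.image (fun t => t⁻¹))).union
      (Set.finite_singleton 1)))
    rintro x ⟨(hx | ⟨y, hy, rfl⟩) | hx, hxK⟩
    · exact Or.inl (Or.inl ⟨hx, hxK⟩)
    · have hy0 : 0 < y := hT0 hy
      refine Or.inl (Or.inr ⟨y, ⟨hy, ?_, ?_⟩, rfl⟩)
      · have h : y⁻¹ ≤ ϑ * ϑ := hxK.2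
        calc (ϑ*ϑ)⁻¹ ≤ (y⁻¹)⁻¹ := inv_anti₀ (inv_pos.2 hy0) h
          _ = y := inv_inv y
      · have h : (ϑ*ϑ)⁻¹ ≤ y⁻¹ := hxK.1
        calc y = (y⁻¹)⁻¹ := (inv_inv y).symm
          _ ≤ ((ϑ*ϑ)⁻¹)⁻¹ := inv_anti₀ (inv_pos.2 hϑϑ0) h
          _ = ϑ*ϑ := inv_inv _
    · exact Or.inr hx
  -- choose rational exponents
  choose! q hq using hTsq
  set d : ℕ := ∏ x ∈ hFfin.toFinset, (q x).den with hdd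
  have hd0 : 0 < d := Finset.prod_pos fun x _ => (q x).pos
  set s : ℝ := t ^ ((d:ℝ)⁻¹) with hsdef
  have hs0 : 0 < s := Real.rpow_pos_of_pos ht _
  have hsd : s ^ (d:ℕ) = t := by
    rw [hsdef, ← Real.rpow_natCast (t ^ ((d:ℝ)⁻¹)) d, ← Real.rpow_mul ht.le,
      inv_mul_cancel₀ (by exact_mod_cast hd0.ne' : (d:ℝ) ≠ 0), Real.rpow_one]
  have hs1 : s ≠ 1 := fun h => ht1 (by rw [← hsd, h, one_pow])
  -- every element of Tstar T ∩ K is an integer power of s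
  have hpow : ∀ x ∈ Tstar T ∩ K, ∃ m : ℤ, x = s ^ m := by
    rintro x ⟨hxT, hxK⟩
    have hdvd : (q x).den ∣ d := Finset.dvd_prod_of_mem _ (hFfin.mem_toFinset.2 ⟨hxT, hxK⟩)
    obtain ⟨c, hc⟩ := hdvd
    have hc0 : c ≠ 0 := by
      rintro rfl; rw [Nat.mul_zero] at hc; exact hd0.ne' hc
    refine ⟨(q x).num * c, ?_⟩
    have hxq : x = t ^ ((q x : ℝ)) := hq x hxT
    have hden0 : ((q x).den : ℝ) ≠ 0 := by exact_mod_cast (q x).pos.ne'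
    have hcR : (c : ℝ) ≠ 0 := by exact_mod_cast hc0
    have hcast : ((q x : ℝ)) = (d:ℝ)⁻¹ * (((q x).num * c : ℤ) : ℝ) := by
      rw [Rat.cast_def]
      have : (d : ℝ) = ((q x).den : ℝ) * (c : ℝ) := by exact_mod_cast congrArg Nat.cast hc
      rw [this]
      push_cast
      field_simp
    have hfin : t ^ ((q x : ℝ)) = s ^ (((q x).num * c : ℤ)) := by
      rw [hcast, Real.rpow_mul ht.le, hsdef, Real.rpow_intCast]
    exact hxq.trans hfin
  -- the products are integer powers of s
  have hTP : TProd T ϑ⁻¹ ϑ ⊆ {x : ℝ | ∃ m : ℤ, x = s ^ m} ∩ Icc ϑ⁻¹ ϑ := by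
    intro x hx
    simp only [TProd, mem_iUnion, mem_setOf_eq] at hx
    obtain ⟨n, hn, f, hf, hxeq, hpp⟩ := hx
    have hn0 : 0 < n := hn
    have hppos : ∀ k : Fin n, 0 < ∏ i ∈ Finset.univ.filter (· ≤ k), f i := fun k =>
      lt_of_lt_of_le hϑi0 (hpp k).1
    have hbase : (Finset.univ.filter (· ≤ (⟨0, hn0⟩ : Fin n))) = {(⟨0, hn0⟩ : Fin n)} := by
      ext i
      simp only [Finset.mem_filter, Finset.mem_univ, true_and, Finset.mem_singleton,
        Fin.le_def, Fin.ext_iff]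
      omega
    have hstep : ∀ (j : ℕ) (h : j + 1 < n),
        (Finset.univ.filter (· ≤ (⟨j+1, h⟩ : Fin n)))
          = insert (⟨j+1, h⟩ : Fin n)
            (Finset.univ.filter (· ≤ (⟨j, Nat.lt_of_succ_lt h⟩ : Fin n))) := by
      intro j h; ext i
      simp only [Finset.mem_filter, Finset.mem_univ, true_and, Finset.mem_insert,
        Fin.le_def, Fin.ext_iff]
      omega
    have hnotmem : ∀ (j : ℕ) (h : j + 1 < n),
        (⟨j+1, h⟩ : Fin n) ∉ (Finset.univ.filter (· ≤ (⟨j, Nat.lt_of_succ_lt h⟩ : Fin n))) := by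
      intro j h
      simp [Fin.le_def]
    have key : ∀ (j : ℕ) (h : j < n),
        ∃ m : ℤ, (∏ i ∈ Finset.univ.filter (· ≤ (⟨j, h⟩ : Fin n)), f i) = s ^ m := by
      intro j
      induction j with
      | zero =>
        intro h
        have h0 := hpp ⟨0, h⟩
        rw [hbase, Finset.prod_singleton] at h0 ⊢
        exact hpow _ ⟨hf _, hIccK h0⟩
      | succ j ih =>
        intro h
        have hj : j < n := Nat.lt_of_succ_lt h
        obtain ⟨m, hm⟩ := ih hj
        have hprod : (∏ i ∈ Finset.univ.filter (· ≤ (⟨j+1, h⟩ : Fin n)), f i)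
            = f ⟨j+1, h⟩ * ∏ i ∈ Finset.univ.filter (· ≤ (⟨j, hj⟩ : Fin n)), f i := by
          rw [hstep j h, Finset.prod_insert (hnotmem j h)]
        have hf0 : 0 < f ⟨j+1, h⟩ := hTs0 (hf _)
        have h1 := hpp ⟨j+1, h⟩
        have h2 := hpp ⟨j, hj⟩
        have hpj : 0 < ∏ i ∈ Finset.univ.filter (· ≤ (⟨j, hj⟩ : Fin n)), f i := hppos _
        rw [hprod] at h1
        have hfK : f ⟨j+1, h⟩ ∈ K := by
          constructor
          · rw [mul_inv]
            nlinarith [mul_inv_cancel₀ (ne_of_gt hϑ0), h1.1, h2.2, inv_pos.2 hϑ0]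
          · nlinarith [mul_inv_cancel₀ (ne_of_gt hϑ0), h1.2, h2.1, inv_pos.2 hϑ0]
        obtain ⟨m', hm'⟩ := hpow _ ⟨hf _, hfK⟩
        exact ⟨m' + m, by rw [hprod, hm, hm', ← zpow_add₀ (ne_of_gt hs0)]⟩
    have hlastlt : n - 1 < n := Nat.sub_lt hn0 one_pos
    have hlast : (Finset.univ.filter (· ≤ (⟨n-1, hlastlt⟩ : Fin n))) = Finset.univ := by
      ext i
      simp only [Finset.mem_filter, Finset.mem_univ, true_and, Fin.le_def, iff_true]
      have := i.isLt
      omega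
    obtain ⟨m, hm⟩ := key (n-1) hlastlt
    have hxicc := hpp ⟨n-1, hlastlt⟩
    rw [hlast] at hm hxicc
    exact ⟨⟨m, by rw [hxeq, hm]⟩, by rw [hxeq]; exact hxicc⟩
  -- finiteness of the set of integer powers of s in the interval
  have hL : Real.log s ≠ 0 := by
    intro h
    rcases Real.log_eq_zero.1 h with h' | h' | h'
    · exact hs0.ne' h'
    · exact hs1 h'
    · linarith [hs0]
  have hPfin : ({x : ℝ | ∃ m : ℤ, x = s ^ m} ∩ Icc ϑ⁻¹ ϑ).Finite := by
    set N : ℤ := ⌈Real.log ϑ / |Real.log s|⌉ with hN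
    apply Set.Finite.subset ((Set.finite_Icc (-N) N).image (fun m : ℤ => s ^ m))
    rintro x ⟨⟨m, rfl⟩, hm⟩
    refine ⟨m, ?_, rfl⟩
    have hls : 0 < |Real.log s| := abs_pos.2 hL
    have hsm0 : (0:ℝ) < s ^ m := zpow_pos hs0 m
    have h1 : |Real.log (s ^ m)| ≤ Real.log ϑ := by
      rw [abs_le]
      constructor
      · rw [← Real.log_inv]
        exact Real.log_le_log hϑi0 hm.1
      · exact Real.log_le_log hsm0 hm.2
    rw [Real.log_zpow] at h1
    have h2 : |(m:ℝ)| * |Real.log s| ≤ Real.log ϑ := by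
      rw [← abs_mul]; exact h1
    have h3 : |(m:ℝ)| ≤ Real.log ϑ / |Real.log s| := (le_div_iff₀ hls).2 h2
    have h4 : |(m:ℝ)| ≤ (N:ℝ) := h3.trans (Int.le_ceil _)
    rw [← Int.cast_abs, Int.cast_le] at h4
    exact Set.mem_Icc.2 (abs_le.1 h4)
  refine ⟨s, hs0, ?_, ?_⟩
  · rintro x ⟨hxI, hxT⟩
    exact hpow x ⟨hxT, hIccK ⟨le_of_lt hxI.1, le_of_lt hxI.2⟩⟩
  · intro hdense
    have hclos : closure (TProd T ϑ⁻¹ ϑ) ⊆ {x : ℝ | ∃ m : ℤ, x = s ^ m} ∩ Icc ϑ⁻¹ ϑ :=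
      hPfin.isClosed.closure_subset_iff.2 hTP
    have hfin : (Icc ϑ⁻¹ ϑ).Finite := hPfin.subset (subset_trans hdense hclos)
    exact Set.Icc_infinite (hϑi.trans hϑ) hfin
end
end

section
/- (Extension lemma) Let T ⊆ (0,∞) be nonempty and I ⊆ (0,∞) an interval with sup I / inf I > R_T. Define e : 2^I → 2^I by e(A) = (T*·A) ∩ I. Then for every nontrivial interval U ⊆ I one has I = ⋃_{n≥0} eⁿ(U). -/
open Set Filter Topology Pointwise

noncomputable section

lemma tstar_pos {T : Set ℝ} (hT0 : T ⊆ Ioi 0) {x : ℝ} (hx : x ∈ Tstar T) : 0 < x := by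
  rcases hx with (h | ⟨t, ht, rfl⟩) | h
  · exact hT0 h
  · exact inv_pos.mpr (hT0 ht)
  · simp only [mem_singleton_iff] at h; rw [h]; norm_num

lemma tstar_inv {T : Set ℝ} {x : ℝ} (hx : x ∈ Tstar T) : x⁻¹ ∈ Tstar T := by
  rcases hx with (h | ⟨t, ht, rfl⟩) | h
  · exact Or.inl (Or.inr ⟨x, h, rfl⟩)
  · exact Or.inl (Or.inl (by simpa using ht))
  · simp only [mem_singleton_iff] at h; rw [h]; exact Or.inr (by simp)

/-- chain lemma: apply the elements of `l` from the head, staying in `I`. -/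
lemma chain2 (T I U : Set ℝ) (l : List ℝ) (hl : ∀ x ∈ l, x ∈ Tstar T) (w : ℝ) (j : ℕ)
    (hw : w ∈ (fun A => (Tstar T * A) ∩ I)^[j] U)
    (hmem : ∀ i, w * (l.take i).prod ∈ I) :
    w * l.prod ∈ (fun A => (Tstar T * A) ∩ I)^[j + l.length] U := by
  induction l generalizing w j with
  | nil => simpa using hw
  | cons a tl IH =>
    have haI : a * w ∈ I := by
      have := hmem 1
      simpa [mul_comm] using this
    have hstep : a * w ∈ (fun A => (Tstar T * A) ∩ I)^[j+1] U := by
      rw [Function.iterate_succ_apply']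
      exact ⟨Set.mul_mem_mul (hl a (List.mem_cons_self)) hw, haI⟩
    have := IH (fun x hx => hl x (List.mem_cons_of_mem a hx)) (a * w) (j+1) hstep
      (fun i => by
        have := hmem (i+1)
        simpa [List.take_succ_cons, List.prod_cons, mul_comm, mul_assoc, mul_left_comm] using this)
    have heq : a * w * tl.prod = w * (a :: tl).prod := by
      rw [List.prod_cons]; ring
    rw [heq] at this
    simpa [Nat.add_comm, Nat.add_assoc, Nat.add_left_comm] using this

lemma unpack {T : Set ℝ} {γm γp p : ℝ} (h : p ∈ TProd T γm γp) :
    ∃ l : List ℝ, (∀ x ∈ l, x ∈ Tstar T) ∧ l.prod = p ∧ 1 ≤ l.length ∧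
      ∀ i, 1 ≤ i → (l.take i).prod ∈ Icc γm γp := by
  simp only [TProd, mem_iUnion, mem_setOf_eq] at h
  obtain ⟨n, hn, t, ht, hp, hpre⟩ := h
  refine ⟨List.ofFn t, ?_, ?_, ?_, ?_⟩
  · intro x hx
    rw [List.mem_ofFn] at hx
    obtain ⟨i, rfl⟩ := hx
    exact ht i
  · rw [List.prod_ofFn]; exact hp.symm
  · simpa using hn
  · have hIcc : ∀ i, 1 ≤ i → i ≤ n → ((List.ofFn t).take i).prod ∈ Icc γm γp := by
      intro i h1 h2
      rw [List.prod_take_ofFn]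
      have : (Finset.univ.filter fun j : Fin n => j.val < i) =
          (Finset.univ.filter (· ≤ (⟨i - 1, by omega⟩ : Fin n))) := by
        apply Finset.filter_congr
        intro j _
        simp only [Fin.le_def]
        constructor <;> intro hj <;> omega
      rw [this]
      exact hpre _
    intro i h1
    rcases le_or_gt i n with h2 | h2
    · exact hIcc i h1 h2
    · have hlen : (List.ofFn t).length = n := by simp
      have heq : (List.ofFn t).take i = List.ofFn t := List.take_of_length_le (by omega)
      have hn' : (List.ofFn t).take n = List.ofFn t := List.take_of_length_le (by omega)
      have := hIcc n (by omega) le_rfl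
      rw [hn'] at this
      rwa [heq]

lemma rev_drop_prod (l : List ℝ) (i : ℕ) :
    (l.reverse.drop i).prod = (l.take (l.length - i)).prod := by
  rcases le_or_gt i l.length with h | h
  · have h2 : l.length - (l.length - i) = i := by omega
    have := List.reverse_take (l := l) (i := l.length - i)
    rw [h2] at this
    rw [← this, List.prod_reverse]
  · have h0 : l.length - i = 0 := by omega
    rw [h0, List.drop_eq_nil_of_le (by simpa using h.le)]
    simp

lemma revtake_prod (l : List ℝ) (hpos : ∀ x ∈ l, (0:ℝ) < x) (i : ℕ) :
    (l.reverse.take i).prod = l.prod / (l.take (l.length - i)).prod := by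
  have hsplit : (l.reverse.take i).prod * (l.reverse.drop i).prod = l.prod := by
    rw [← List.prod_append, List.take_append_drop, List.prod_reverse]
  have hpos2 : 0 < (l.take (l.length - i)).prod :=
    List.prod_pos (fun x hx => hpos x (List.take_subset _ _ hx))
  rw [eq_div_iff (ne_of_gt hpos2), ← hsplit, rev_drop_prod]

lemma map_inv_prod (l : List ℝ) : (l.map (·⁻¹)).prod = l.prod⁻¹ := by
  induction l with
  | nil => simp
  | cons a tl IH => simp [List.prod_cons, IH, mul_inv, mul_comm]

lemma dense_hit {T : Set ℝ} {γm γp : ℝ} (hd : DenseInIcc T γm γp) {α β : ℝ}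
    (h1 : γm ≤ α) (h2 : β ≤ γp) (h3 : α < β) :
    ∃ p ∈ TProd T γm γp, α < p ∧ p < β := by
  have hμ : (α + β) / 2 ∈ Icc γm γp := ⟨by linarith, by linarith⟩
  have hc := hd hμ
  rw [Metric.mem_closure_iff] at hc
  obtain ⟨q, hq, hdist⟩ := hc ((β - α) / 2) (by linarith)
  rw [Real.dist_eq, abs_lt] at hdist
  exact ⟨q, hq, by constructor <;> linarith [hdist.1, hdist.2]⟩

lemma list_prod_le_one {l : List ℝ} (h0 : ∀ x ∈ l, (0:ℝ) < x) (h1 : ∀ x ∈ l, x ≤ 1) :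
    l.prod ≤ 1 := by
  induction l with
  | nil => simp
  | cons a tl IH =>
    rw [List.prod_cons]
    have ha := h1 a (List.mem_cons_self)
    have hp := IH (fun x hx => h0 x (List.mem_cons_of_mem a hx))
      (fun x hx => h1 x (List.mem_cons_of_mem a hx))
    have hpos : (0:ℝ) ≤ tl.prod :=
      (List.prod_pos (fun x hx => h0 x (List.mem_cons_of_mem a hx))).le
    nlinarith

lemma replicate_chain (T I U : Set ℝ) (x : ℝ) (hxT : x ∈ Tstar T) (w : ℝ) (k₀ k : ℕ)
    (hw : w ∈ (fun A => (Tstar T * A) ∩ I)^[k] U)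
    (hmem : ∀ j ≤ k₀, w * x ^ j ∈ I) :
    w * x ^ k₀ ∈ (fun A => (Tstar T * A) ∩ I)^[k + k₀] U := by
  have := chain2 T I U (List.replicate k₀ x)
    (fun z hz => by rw [List.eq_of_mem_replicate hz]; exact hxT) w k hw
    (fun i => by
      rw [List.take_replicate, List.prod_replicate]
      exact hmem _ (min_le_right _ _))
  simpa [List.prod_replicate, List.length_replicate] using this

set_option maxHeartbeats 1000000 in
theorem stmt13 (T : Set ℝ) (hT : T.Nonempty) (hT0 : T ⊆ Ioi 0)
    (I : Set ℝ) (hI : I ⊆ Ioi 0) (hIint : I.OrdConnected)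
    (hratio : limitRatio T < eSup I / eInf I)
    (U : Set ℝ) (hU : U ⊆ I) (hUint : U.OrdConnected)
    (hUnt : ∃ a ∈ U, ∃ b ∈ U, a ≠ b) :
    I = ⋃ n : ℕ, (fun A => (Tstar T * A) ∩ I)^[n] U := by
  have hEsub : ∀ n, (fun A => (Tstar T * A) ∩ I)^[n] U ⊆ I := by
    intro n
    cases n with
    | zero => simpa using hU
    | succ n => rw [Function.iterate_succ_apply']; exact inter_subset_right
  apply Subset.antisymm
  swap
  · exact iUnion_subset hEsub
  intro y hy
  rw [mem_iUnion]
  -- extract the density pair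
  rw [limitRatio] at hratio
  obtain ⟨r, ⟨γm, γp, hγmIoo, hγp, hdense, rfl⟩, hrlt⟩ := sInf_lt_iff.mp hratio
  obtain ⟨hγm0, hγm1⟩ := hγmIoo
  have hγp0 : (0:ℝ) < γp := lt_trans one_pos hγp
  have hγmγp : γm < γp := lt_trans hγm1 hγp
  -- extract a₀ b₀ with γp * a₀ < γm * b₀
  have hex : ∃ a ∈ I, ∃ b ∈ I, γp * a < γm * b := by
    by_contra hcon
    push_neg at hcon
    have hle : eSup I / eInf I ≤ ENNReal.ofReal (γp / γm) := by
      apply ENNReal.div_le_of_le_mul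
      rw [eSup]
      apply iSup₂_le
      intro b hb
      have h1 : ENNReal.ofReal (γm / γp * b) ≤ eInf I := by
        rw [eInf]
        apply le_iInf₂
        intro c hc
        apply ENNReal.ofReal_le_ofReal
        have := hcon c hc b hb
        rw [div_mul_eq_mul_div, div_le_iff₀ hγp0]
        nlinarith
      calc ENNReal.ofReal b = ENNReal.ofReal (γp / γm * (γm / γp * b)) := by
            congr 1
            field_simp
        _ = ENNReal.ofReal (γp / γm) * ENNReal.ofReal (γm / γp * b) :=
            ENNReal.ofReal_mul (by positivity)
        _ ≤ ENNReal.ofReal (γp / γm) * eInf I := mul_le_mul_right h1 _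
    exact absurd hrlt (not_lt.mpr hle)
  obtain ⟨a₀, ha₀, b₀, hb₀, hab₀⟩ := hex
  -- two points of U
  obtain ⟨u₀, u₁, hu₀U, hu₁U, hu01⟩ : ∃ u₀ u₁, u₀ ∈ U ∧ u₁ ∈ U ∧ u₀ < u₁ := by
    obtain ⟨c, hc, d, hd, hne⟩ := hUnt
    rcases hne.lt_or_gt with h | h
    · exact ⟨c, d, hc, hd, h⟩
    · exact ⟨d, c, hd, hc, h⟩
  set a := min a₀ u₀ with ha_def
  set b := max b₀ u₁ with hb_def
  have ha : a ∈ I := by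
    rcases le_total a₀ u₀ with h | h
    · rw [ha_def, min_eq_left h]; exact ha₀
    · rw [ha_def, min_eq_right h]; exact hU hu₀U
  have hb : b ∈ I := by
    rcases le_total b₀ u₁ with h | h
    · rw [hb_def, max_eq_right h]; exact hU hu₁U
    · rw [hb_def, max_eq_left h]; exact hb₀
  have ha0 : (0:ℝ) < a := hI ha
  have hb0 : (0:ℝ) < b := hI hb
  have hu₀0 : (0:ℝ) < u₀ := hI (hU hu₀U)
  have hu₁0 : (0:ℝ) < u₁ := hI (hU hu₁U)
  have hy0 : (0:ℝ) < y := hI hy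
  have hab : γp * a < γm * b := by
    calc γp * a ≤ γp * a₀ := by
          have : a ≤ a₀ := min_le_left _ _
          nlinarith
      _ < γm * b₀ := hab₀
      _ ≤ γm * b := by
          have : b₀ ≤ b := le_max_left _ _
          nlinarith
  have haltb : a < b := by nlinarith
  have hu0b : u₀ < b := lt_of_lt_of_le hu01 (le_max_right _ _)
  have hau1 : a < u₁ := lt_of_le_of_lt (min_le_right _ _) hu01
  have hau0 : a ≤ u₀ := min_le_right _ _
  have hu1b : u₁ ≤ b := le_max_right _ _
  -- W = Ioo (γp*a) (γm*b) and its safety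
  have hWI : Ioo (γp*a) (γm*b) ⊆ I := by
    intro x hx
    apply hIint.out ha hb
    constructor
    · nlinarith [hx.1]
    · nlinarith [hx.2]
  have hWsafe : ∀ z ∈ Ioo (γp*a) (γm*b), Icc (z/γp) (z/γm) ⊆ I := by
    intro z hz x hx
    apply hIint.out ha hb
    constructor
    · calc a ≤ z / γp := by rw [le_div_iff₀ hγp0]; nlinarith [hz.1]
        _ ≤ x := hx.1
    · calc x ≤ z / γm := hx.2
        _ ≤ b := by rw [div_le_iff₀ hγm0]; nlinarith [hz.2]
  have hUI : Ioo u₀ u₁ ⊆ U := fun x hx => hUint.out hu₀U hu₁U ⟨hx.1.le, hx.2.le⟩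
  -- main reverse-chain lemma
  have HA : ∀ c d : ℝ, 0 < c → c < d → Ioo c d ⊆ I →
      (∀ x ∈ Ioo c d, ∃ k, x ∈ (fun A => (Tstar T * A) ∩ I)^[k] U) →
      ∀ z ∈ Ioo (γp*a) (γm*b), γm * c < z → z < γp * d →
      ∃ k, z ∈ (fun A => (Tstar T * A) ∩ I)^[k] U := by
    intro c d hc0 hcd hcdI hcS z hzW hzc hzd
    have hz0 : 0 < z := by nlinarith [hzW.1]
    have hd0 : 0 < d := lt_trans hc0 hcd
    have hαβ : max γm (z/d) < min γp (z/c) := by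
      apply max_lt
      · apply lt_min hγmγp
        rw [lt_div_iff₀ hc0]; nlinarith
      · apply lt_min
        · rw [div_lt_iff₀ hd0]; nlinarith
        · exact div_lt_div_of_pos_left hz0 hc0 hcd
    obtain ⟨p, hpT, hp1, hp2⟩ := dense_hit hdense (le_max_left _ _) (min_le_left _ _) hαβ
    have hpγm : γm < p := lt_of_le_of_lt (le_max_left _ _) hp1
    have hpγp : p < γp := lt_of_lt_of_le hp2 (min_le_left _ _)
    have hp0 : 0 < p := lt_trans hγm0 hpγm
    have hwc : c < z/p := by
      rw [lt_div_iff₀ hp0]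
      have h := lt_of_lt_of_le hp2 (min_le_right _ _)
      rw [lt_div_iff₀ hc0] at h
      nlinarith
    have hwd : z/p < d := by
      rw [div_lt_iff₀ hp0]
      have h := lt_of_le_of_lt (le_max_right _ _) hp1
      rw [div_lt_iff₀ hd0] at h
      nlinarith
    obtain ⟨k, hk⟩ := hcS (z/p) ⟨hwc, hwd⟩
    obtain ⟨l, hlT, hlp, hllen, hlpre⟩ := unpack hpT
    have hlpos : ∀ x ∈ l, (0:ℝ) < x := fun x hx => tstar_pos hT0 (hlT x hx)
    have hmem : ∀ i, (z/p) * (l.reverse.take i).prod ∈ I := by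
      intro i
      rw [revtake_prod l hlpos i, hlp]
      have hq0 : 0 < (l.take (l.length - i)).prod :=
        List.prod_pos (fun x hx => hlpos x (List.take_subset _ _ hx))
      have heq : z/p * (p/(l.take (l.length - i)).prod) = z/(l.take (l.length - i)).prod := by
        field_simp
      rw [heq]
      rcases Nat.eq_zero_or_pos (l.length - i) with h0 | hpos1
      · rw [h0]
        simpa using hWI hzW
      · have hqIcc := hlpre _ hpos1
        apply hWsafe z hzW
        exact ⟨div_le_div_of_nonneg_left hz0.le hq0 hqIcc.2,
          div_le_div_of_nonneg_left hz0.le hγm0 hqIcc.1⟩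
    have hchain := chain2 T I U l.reverse (fun x hx => hlT x (List.mem_reverse.mp hx)) (z/p) k hk hmem
    rw [List.prod_reverse, hlp, div_mul_cancel₀ _ (ne_of_gt hp0)] at hchain
    exact ⟨_, hchain⟩
  -- cover W
  have hcov : ∀ N : ℕ, ∀ z ∈ Ioo (γp*a) (γm*b),
      γm^(N+1) * u₀ < z → z < γp^(N+1) * u₁ →
      ∃ k, z ∈ (fun A => (Tstar T * A) ∩ I)^[k] U := by
    intro N
    induction N with
    | zero =>
      intro z hz h1 h2
      exact HA u₀ u₁ hu₀0 hu01 (fun x hx => hU (hUI hx)) (fun x hx => ⟨0, hUI hx⟩) z hz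
        (by rw [pow_one] at h1; exact h1) (by rw [pow_one] at h2; exact h2)
    | succ N IH =>
      intro z hz h1 h2
      have hpm1 : γm^(N+1) ≤ 1 := pow_le_one₀ hγm0.le hγm1.le
      have hpp1 : (1:ℝ) ≤ γp^(N+1) := one_le_pow₀ hγp.le
      have hpmm : γm^(N+1) ≤ γm := by
        calc γm^(N+1) ≤ γm^1 := pow_le_pow_of_le_one hγm0.le hγm1.le (by omega)
          _ = γm := pow_one γm
      have hppp : γp ≤ γp^(N+1) := by
        calc γp = γp^1 := (pow_one γp).symm
          _ ≤ γp^(N+1) := pow_le_pow_right₀ hγp.le (by omega)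
      have hpm0 : (0:ℝ) < γm^(N+1) := pow_pos hγm0 _
      have hpp0 : (0:ℝ) < γp^(N+1) := pow_pos hγp0 _
      have hA : γm^(N+1) * u₀ < γp^(N+1) * u₁ := by nlinarith
      have hB : γm^(N+1) * u₀ < γm * b := by nlinarith
      have hC : γp * a < γp^(N+1) * u₁ := by nlinarith
      have hcd : max (γm^(N+1) * u₀) (γp*a) < min (γp^(N+1) * u₁) (γm*b) :=
        max_lt (lt_min hA hB) (lt_min hC hab)
      have hc0 : (0:ℝ) < max (γm^(N+1) * u₀) (γp*a) :=
        lt_of_lt_of_le (by positivity) (le_max_right _ _)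
      have hIoo : Ioo (max (γm^(N+1) * u₀) (γp*a)) (min (γp^(N+1) * u₁) (γm*b)) ⊆ I :=
        fun x hx => hWI ⟨lt_of_le_of_lt (le_max_right _ _) hx.1,
          lt_of_lt_of_le hx.2 (min_le_right _ _)⟩
      have hS : ∀ x ∈ Ioo (max (γm^(N+1) * u₀) (γp*a)) (min (γp^(N+1) * u₁) (γm*b)),
          ∃ k, x ∈ (fun A => (Tstar T * A) ∩ I)^[k] U := by
        intro x hx
        exact IH x ⟨lt_of_le_of_lt (le_max_right _ _) hx.1,
            lt_of_lt_of_le hx.2 (min_le_right _ _)⟩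
          (lt_of_le_of_lt (le_max_left _ _) hx.1)
          (lt_of_lt_of_le hx.2 (min_le_left _ _))
      apply HA _ _ hc0 hcd hIoo hS z hz
      · rcases max_cases (γm^(N+1) * u₀) (γp*a) with ⟨hmx, _⟩ | ⟨hmx, _⟩ <;> rw [hmx]
        · have : γm^(N+1+1) * u₀ < z := h1
          calc γm * (γm^(N+1) * u₀) = γm^(N+1+1) * u₀ := by ring
            _ < z := h1
        · nlinarith [hz.1]
      · rcases min_cases (γp^(N+1) * u₁) (γm*b) with ⟨hmx, _⟩ | ⟨hmx, _⟩ <;> rw [hmx]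
        · calc z < γp^(N+1+1) * u₁ := h2
            _ = γp * (γp^(N+1) * u₁) := by ring
        · nlinarith [hz.2]
  have hcovW : ∀ z ∈ Ioo (γp*a) (γm*b), ∃ k, z ∈ (fun A => (Tstar T * A) ∩ I)^[k] U := by
    intro z hz
    have hz0 : 0 < z := by nlinarith [hz.1]
    obtain ⟨N₁, hN₁⟩ := exists_pow_lt_of_lt_one (div_pos hz0 hu₀0) hγm1
    obtain ⟨N₂, hN₂⟩ := pow_unbounded_of_one_lt (z / u₁) hγp
    apply hcov (max N₁ N₂) z hz
    · have h1 : γm^(max N₁ N₂ + 1) ≤ γm^N₁ :=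
        pow_le_pow_of_le_one hγm0.le hγm1.le (le_trans (le_max_left _ _) (Nat.le_succ _))
      rw [lt_div_iff₀ hu₀0] at hN₁
      calc γm^(max N₁ N₂ + 1) * u₀ ≤ γm^N₁ * u₀ := by nlinarith [pow_pos hγm0 N₁]
        _ < z := by nlinarith
    · have h2 : γp^N₂ ≤ γp^(max N₁ N₂ + 1) :=
        pow_le_pow_right₀ hγp.le (le_trans (le_max_right _ _) (Nat.le_succ _))
      rw [div_lt_iff₀ hu₁0] at hN₂
      calc z < γp^N₂ * u₁ := by nlinarith
        _ ≤ γp^(max N₁ N₂ + 1) * u₁ := by nlinarith [pow_pos hγp0 N₂]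
  -- middle coverage
  have hmid : ∀ y' ∈ I, a < y' → y' < b → ∃ k, y' ∈ (fun A => (Tstar T * A) ∩ I)^[k] U := by
    intro y' hy' h1 h2
    have hy'0 : (0:ℝ) < y' := hI hy'
    have hαβ : max γm (γp*a/y') < min γp (γm*b/y') := by
      apply max_lt
      · apply lt_min hγmγp
        rw [lt_div_iff₀ hy'0]; nlinarith
      · apply lt_min
        · rw [div_lt_iff₀ hy'0]; nlinarith
        · rw [div_lt_div_iff₀ hy'0 hy'0]; nlinarith
    obtain ⟨p, hpT, hp1, hp2⟩ := dense_hit hdense (le_max_left _ _) (min_le_left _ _) hαβ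
    have hpγm : γm < p := lt_of_le_of_lt (le_max_left _ _) hp1
    have hpγp : p < γp := lt_of_lt_of_le hp2 (min_le_left _ _)
    have hp0 : 0 < p := lt_trans hγm0 hpγm
    have hzW : y' * p ∈ Ioo (γp*a) (γm*b) := by
      constructor
      · have h := lt_of_le_of_lt (le_max_right _ _) hp1
        rw [div_lt_iff₀ hy'0] at h
        nlinarith
      · have h := lt_of_lt_of_le hp2 (min_le_right _ _)
        rw [lt_div_iff₀ hy'0] at h
        nlinarith
    obtain ⟨k, hk⟩ := hcovW (y' * p) hzW
    obtain ⟨l, hlT, hlp, hllen, hlpre⟩ := unpack hpT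
    have hlpos : ∀ x ∈ l, (0:ℝ) < x := fun x hx => tstar_pos hT0 (hlT x hx)
    have hmem : ∀ i, (y' * p) * ((l.map (·⁻¹)).take i).prod ∈ I := by
      intro i
      rw [← List.map_take, map_inv_prod]
      rcases Nat.eq_zero_or_pos i with h0 | hpos1
      · rw [h0]
        simpa using hWI hzW
      · have hqIcc := hlpre i hpos1
        have hq0 : 0 < (l.take i).prod :=
          List.prod_pos (fun x hx => hlpos x (List.take_subset _ _ hx))
        have heq : (y' * p) * ((l.take i).prod)⁻¹ = (y' * p)/(l.take i).prod := by
          rw [div_eq_mul_inv]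
        rw [heq]
        have hzz0 : 0 < y' * p := by positivity
        apply hWsafe _ hzW
        exact ⟨div_le_div_of_nonneg_left hzz0.le hq0 hqIcc.2,
          div_le_div_of_nonneg_left hzz0.le hγm0 hqIcc.1⟩
    have helem : ∀ x ∈ l.map (·⁻¹), x ∈ Tstar T := by
      intro x hx
      rw [List.mem_map] at hx
      obtain ⟨x', hx', rfl⟩ := hx
      exact tstar_inv (hlT x' hx')
    have hchain := chain2 T I U (l.map (·⁻¹)) helem (y' * p) k hk hmem
    rw [map_inv_prod, hlp] at hchain
    rw [mul_assoc, mul_inv_cancel₀ (ne_of_gt hp0), mul_one] at hchain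
    exact ⟨_, hchain⟩
  -- a step element
  have hxex : ∃ x ∈ Tstar T, 1 < x ∧ x ≤ γp / γm := by
    obtain ⟨p₁, hp₁T, h11, h12⟩ := dense_hit hdense hγm1.le le_rfl hγp
    obtain ⟨l, hlT, hlp, hllen, hlpre⟩ := unpack hp₁T
    have hlpos : ∀ x ∈ l, (0:ℝ) < x := fun x hx => tstar_pos hT0 (hlT x hx)
    have hbig : ∃ x ∈ l, 1 < x := by
      by_contra hcon
      push_neg at hcon
      have := list_prod_le_one hlpos hcon
      rw [hlp] at this
      linarith
    obtain ⟨x, hxl, hx1⟩ := hbig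
    obtain ⟨i, hi, hxi⟩ := List.getElem_of_mem hxl
    have hps : (l.take (i+1)).prod = (l.take i).prod * x := by
      rw [List.prod_take_succ l i hi, hxi]
    have htb : γm ≤ (l.take i).prod := by
      rcases Nat.eq_zero_or_pos i with h0 | hpos1
      · rw [h0]; simpa using hγm1.le
      · exact (hlpre i hpos1).1
    have hta : (l.take (i+1)).prod ≤ γp := (hlpre (i+1) (by omega)).2
    have hq0 : 0 < (l.take i).prod :=
      List.prod_pos (fun z hz => hlpos z (List.take_subset _ _ hz))
    refine ⟨x, hlT x hxl, hx1, ?_⟩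
    rw [le_div_iff₀ hγm0]
    nlinarith
  rcases lt_or_ge a y with h1 | h1
  · rcases lt_or_ge y b with h2 | h2
    · exact hmid y hy h1 h2
    · -- y ≥ b : descend
      obtain ⟨x, hxT, hx1, hxb⟩ := hxex
      have hx0 : (0:ℝ) < x := lt_trans one_pos hx1
      have hxne : x ≠ 0 := ne_of_gt hx0
      have hinv : x⁻¹ * x = 1 := inv_mul_cancel₀ hxne
      have hxi0 : (0:ℝ) < x⁻¹ := inv_pos.mpr hx0
      have hxi1 : x⁻¹ < 1 := by nlinarith
      have hfieldid : γm / γp * (γp / γm) = 1 := by field_simp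
      have hxinv_ge : γm / γp ≤ x⁻¹ := by nlinarith [div_pos hγm0 hγp0]
      have hek : ∃ k : ℕ, y * x⁻¹ ^ k < b := by
        obtain ⟨k, hk⟩ := exists_pow_lt_of_lt_one (div_pos hb0 hy0) hxi1
        refine ⟨k, ?_⟩
        rw [lt_div_iff₀ hy0] at hk
        nlinarith
      have hk₀spec : y * x⁻¹ ^ (Nat.find hek) < b := Nat.find_spec hek
      set k₀ := Nat.find hek with hk₀def
      have hk₀ne : k₀ ≠ 0 := by
        intro h
        rw [h, pow_zero, mul_one] at hk₀spec
        linarith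
      have hprev : b ≤ y * x⁻¹ ^ (k₀ - 1) := by
        have h := Nat.find_min hek (m := k₀ - 1) (by omega)
        linarith [not_lt.mp h]
      have hlow : a < y * x⁻¹ ^ k₀ := by
        have hst : y * x⁻¹ ^ k₀ = (y * x⁻¹ ^ (k₀-1)) * x⁻¹ := by
          rw [mul_assoc, ← pow_succ]
          congr 2
          omega
        have h1 : b * (γm/γp) ≤ (y * x⁻¹ ^ (k₀-1)) * x⁻¹ :=
          mul_le_mul hprev hxinv_ge (by positivity) (by nlinarith [pow_pos hxi0 (k₀-1)])
        have h2 : a < b * (γm/γp) := by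
          have hid : b * (γm / γp) * γp = γm * b := by field_simp
          nlinarith
        rw [hst]
        linarith
      have hy'I : y * x⁻¹ ^ k₀ ∈ I := hIint.out ha hb ⟨hlow.le, hk₀spec.le⟩
      obtain ⟨k, hk⟩ := hmid _ hy'I hlow hk₀spec
      have hmem : ∀ j ≤ k₀, (y * x⁻¹ ^ k₀) * x ^ j ∈ I := by
        intro j hj
        have hsplit : x ^ k₀ = x ^ (k₀ - j) * x ^ j := by
          rw [← pow_add]
          congr 1
          omega
        have hval : (y * x⁻¹ ^ k₀) * x ^ j = y * x⁻¹ ^ (k₀ - j) := by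
          calc (y * x⁻¹ ^ k₀) * x ^ j
              = y * ((x ^ (k₀-j))⁻¹ * ((x ^ j)⁻¹ * x ^ j)) := by
                rw [inv_pow, hsplit, mul_inv]; ring
            _ = y * (x ^ (k₀-j))⁻¹ := by
                rw [inv_mul_cancel₀ (pow_ne_zero _ hxne), mul_one]
            _ = y * x⁻¹ ^ (k₀-j) := by rw [inv_pow]
        rw [hval]
        apply hIint.out hy'I hy
        constructor
        · exact mul_le_mul_of_nonneg_left
            (pow_le_pow_of_le_one hxi0.le hxi1.le (Nat.sub_le k₀ j)) hy0.le
        · calc y * x⁻¹ ^ (k₀ - j) ≤ y * 1 :=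
              mul_le_mul_of_nonneg_left (pow_le_one₀ hxi0.le hxi1.le) hy0.le
            _ = y := mul_one y
      have hchain := replicate_chain T I U x hxT _ k₀ k hk hmem
      have hfin : (y * x⁻¹ ^ k₀) * x ^ k₀ = y := by
        rw [inv_pow, mul_assoc, inv_mul_cancel₀ (pow_ne_zero _ hxne), mul_one]
      rw [hfin] at hchain
      exact ⟨_, hchain⟩
  · -- y ≤ a : climb
    obtain ⟨x, hxT, hx1, hxb⟩ := hxex
    have hx0 : (0:ℝ) < x := lt_trans one_pos hx1
    have hxne : x ≠ 0 := ne_of_gt hx0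
    have hinv : x⁻¹ * x = 1 := inv_mul_cancel₀ hxne
    have hxi0 : (0:ℝ) < x⁻¹ := inv_pos.mpr hx0
    have hek : ∃ k : ℕ, a < y * x ^ k := by
      obtain ⟨k, hk⟩ := pow_unbounded_of_one_lt (a / y) hx1
      refine ⟨k, ?_⟩
      rw [div_lt_iff₀ hy0] at hk
      nlinarith
    have hk₀spec : a < y * x ^ (Nat.find hek) := Nat.find_spec hek
    set k₀ := Nat.find hek with hk₀def
    have hk₀ne : k₀ ≠ 0 := by
      intro h
      rw [h, pow_zero, mul_one] at hk₀spec
      linarith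
    have hprev : y * x ^ (k₀ - 1) ≤ a := by
      have h := Nat.find_min hek (m := k₀ - 1) (by omega)
      linarith [not_lt.mp h]
    have hhigh : y * x ^ k₀ < b := by
      have hst : y * x ^ k₀ = (y * x ^ (k₀-1)) * x := by
        rw [mul_assoc, ← pow_succ]
        congr 2
        omega
      have h1 : (y * x ^ (k₀-1)) * x ≤ a * (γp/γm) :=
        mul_le_mul hprev hxb hx0.le ha0.le
      have h2 : a * (γp/γm) < b := by
        have hid : a * (γp / γm) * γm = γp * a := by field_simp
        nlinarith
      rw [hst]
      linarith
    have hy'I : y * x ^ k₀ ∈ I := hIint.out hy hb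
      ⟨le_mul_of_one_le_right hy0.le (one_le_pow₀ hx1.le), hhigh.le⟩
    obtain ⟨k, hk⟩ := hmid _ hy'I hk₀spec hhigh
    have hmem : ∀ j ≤ k₀, (y * x ^ k₀) * x⁻¹ ^ j ∈ I := by
      intro j hj
      have hsplit : x ^ k₀ = x ^ (k₀ - j) * x ^ j := by
        rw [← pow_add]
        congr 1
        omega
      have hval : (y * x ^ k₀) * x⁻¹ ^ j = y * x ^ (k₀ - j) := by
        calc (y * x ^ k₀) * x⁻¹ ^ j
            = y * (x ^ (k₀-j) * (x ^ j * (x ^ j)⁻¹)) := by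
              rw [inv_pow, hsplit]; ring
          _ = y * x ^ (k₀-j) := by
              rw [mul_inv_cancel₀ (pow_ne_zero _ hxne), mul_one]
      rw [hval]
      apply hIint.out hy hy'I
      constructor
      · exact le_mul_of_one_le_right hy0.le (one_le_pow₀ hx1.le)
      · exact mul_le_mul_of_nonneg_left
          (pow_le_pow_right₀ hx1.le (Nat.sub_le k₀ j)) hy0.le
    have hchain := replicate_chain T I U x⁻¹ (tstar_inv hxT) _ k₀ k hk hmem
    have hfin : (y * x ^ k₀) * x⁻¹ ^ k₀ = y := by
      rw [inv_pow, mul_assoc, mul_inv_cancel₀ (pow_ne_zero _ hxne), mul_one]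
    rw [hfin] at hchain
    exact ⟨_, hchain⟩
end
end

section
/- (Extension theorem, continuity case) Let T ⊆ (0,∞) be nonempty, I ⊆ (0,∞) an open interval with sup I / inf I > R_T, and J ⊆ ℝ an open interval. Suppose g_t : I × J → J are continuous for all t ∈ T*, and φ : I → J satisfies φ(tx) = g_t(x, φ(x)) for all t ∈ T* and x ∈ I ∩ t⁻¹I. If φ is continuous on some nontrivial subinterval U ⊆ I, then φ is continuous on I. -/
open Set Filter Topology Pointwise

noncomputable section

theorem stmt14 (T : Set ℝ) (hT : T.Nonempty) (hT0 : T ⊆ Ioi 0)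
    (I J : Set ℝ) (hI : I ⊆ Ioi 0) (hIo : IsOpen I) (hIint : I.OrdConnected)
    (hJo : IsOpen J) (hJint : J.OrdConnected)
    (hratio : limitRatio T < eSup I / eInf I)
    (g : ℝ → ℝ → ℝ → ℝ)
    (hg : ∀ t ∈ Tstar T, ContinuousOn (fun p : ℝ × ℝ => g t p.1 p.2) (I ×ˢ J))
    (hgmap : ∀ t ∈ Tstar T, ∀ x ∈ I, ∀ y ∈ J, g t x y ∈ J)
    (φ : ℝ → ℝ) (hφmap : ∀ x ∈ I, φ x ∈ J)
    (hφeq : ∀ t ∈ Tstar T, ∀ x ∈ I, t * x ∈ I → φ (t * x) = g t x (φ x))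
    (U : Set ℝ) (hU : U ⊆ I) (hUint : U.OrdConnected)
    (hUnt : ∃ a ∈ U, ∃ b ∈ U, a ≠ b)
    (hcont : ContinuousOn φ U) :
    ContinuousOn φ I := by
  classical
  -- extract γm, γp from the ratio hypothesis
  obtain ⟨r, ⟨γm, γp, hγmIoo, hγp1, hdense, hrdef⟩, hrlt⟩ := sInf_lt_iff.mp hratio
  subst hrdef
  obtain ⟨hγm0, hγm1⟩ := hγmIoo
  have hγp0 : (0:ℝ) < γp := lt_trans one_pos hγp1
  -- positivity and inverse-closedness of T*
  have htpos : ∀ t ∈ Tstar T, 0 < t := by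
    intro t ht
    rcases ht with (ht | ⟨s, hs, rfl⟩) | ht
    · exact hT0 ht
    · exact inv_pos.mpr (hT0 hs)
    · rw [mem_singleton_iff] at ht; rw [ht]; exact one_pos
  have hinv : ∀ t ∈ Tstar T, t⁻¹ ∈ Tstar T := by
    intro t ht
    rcases ht with (ht | ⟨s, hs, rfl⟩) | ht
    · exact Or.inl (Or.inr ⟨t, ht, rfl⟩)
    · rw [inv_inv]; exact Or.inl (Or.inl hs)
    · rw [mem_singleton_iff] at ht; rw [ht, inv_one]; exact Or.inr rfl
  -- the key ratio fact
  have hfact : ∃ u ∈ I, ∃ v ∈ I, γp * u < γm * v := by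
    set r := ENNReal.ofReal (γp / γm) with hrdef
    have hr0 : r ≠ 0 := by
      simp only [hrdef, ne_eq, ENNReal.ofReal_eq_zero, not_le]
      positivity
    have hrtop : r ≠ ⊤ := ENNReal.ofReal_ne_top
    have hne : I.Nonempty := by
      by_contra h
      rw [not_nonempty_iff_eq_empty] at h
      subst h
      simp [eSup, eInf] at hrlt
    obtain ⟨w, hw⟩ := hne
    have hw0 : 0 < w := hI hw
    have hsup_pos : 0 < eSup I := by
      have h1 : ENNReal.ofReal w ≤ eSup I := le_biSup _ hw
      exact lt_of_lt_of_le (by simp [ENNReal.ofReal_pos, hw0]) h1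
    have heInf_top : eInf I ≠ ⊤ :=
      ne_top_of_le_ne_top ENNReal.ofReal_ne_top (biInf_le _ hw)
    have hstep1 : r * eInf I < eSup I := by
      rcases eq_or_ne (eInf I) 0 with h0 | h0
      · rw [h0, mul_zero]; exact hsup_pos
      · exact (ENNReal.lt_div_iff_mul_lt (Or.inl h0) (Or.inl heInf_top)).mp hrlt
    obtain ⟨v, hv, hv2⟩ : ∃ v ∈ I, r * eInf I < ENNReal.ofReal v := by
      rw [eSup, lt_iSup_iff] at hstep1
      obtain ⟨v, hv⟩ := hstep1
      rw [lt_iSup_iff] at hv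
      obtain ⟨hvI, h⟩ := hv
      exact ⟨v, hvI, h⟩
    have hstep2 : eInf I < ENNReal.ofReal v / r := by
      rw [ENNReal.lt_div_iff_mul_lt (Or.inl hr0) (Or.inl hrtop), mul_comm]
      exact hv2
    obtain ⟨u, hu, hu2⟩ : ∃ u ∈ I, ENNReal.ofReal u < ENNReal.ofReal v / r := by
      rw [eInf, iInf_lt_iff] at hstep2
      obtain ⟨u, h⟩ := hstep2
      rw [iInf_lt_iff] at h
      obtain ⟨huI, h⟩ := h
      exact ⟨u, huI, h⟩
    refine ⟨u, hu, v, hv, ?_⟩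
    have hmul : r * ENNReal.ofReal u < ENNReal.ofReal v := by
      rw [mul_comm]
      exact (ENNReal.lt_div_iff_mul_lt (Or.inl hr0) (Or.inl hrtop)).mp hu2
    have hu0 : 0 < u := hI hu
    rw [hrdef, ← ENNReal.ofReal_mul (by positivity)] at hmul
    have hv0 : 0 < v := hI hv
    have h3 : γp / γm * u < v := by
      rwa [ENNReal.ofReal_lt_ofReal_iff hv0] at hmul
    rw [div_mul_eq_mul_div, div_lt_iff₀ hγm0] at h3
    linarith [h3]
  -- the set of points with an open neighborhood of continuity
  set Ω : Set ℝ := {x : ℝ | ∃ V : Set ℝ, IsOpen V ∧ x ∈ V ∧ V ⊆ I ∧ ∀ y ∈ V, ContinuousAt φ y}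
    with hΩdef
  have hΩopen : IsOpen Ω := by
    refine isOpen_iff_forall_mem_open.mpr ?_
    rintro x ⟨V, hVo, hxV, hVI, hVc⟩
    exact ⟨V, fun y hy => ⟨V, hVo, hy, hVI, hVc⟩, hVo, hxV⟩
  have hΩI : Ω ⊆ I := by rintro x ⟨V, _, hxV, hVI, _⟩; exact hVI hxV
  have hΩat : ∀ x ∈ Ω, ContinuousAt φ x := by rintro x ⟨V, _, hxV, _, hVc⟩; exact hVc x hxV
  -- one-step propagation of continuity
  have hL1 : ∀ t ∈ Tstar T, ∀ x ∈ I, ContinuousAt φ x → t * x ∈ I → ContinuousAt φ (t * x) := by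
    intro t ht x hxI hcx htx
    have ht0 : (0:ℝ) < t := htpos t ht
    have htne : t ≠ 0 := ne_of_gt ht0
    have hxx : t * x / t = x := mul_div_cancel_left₀ x htne
    have hgc : ContinuousAt (fun p : ℝ × ℝ => g t p.1 p.2) (x, φ x) :=
      (hg t ht).continuousAt (IsOpen.mem_nhds (hIo.prod hJo) ⟨hxI, hφmap x hxI⟩)
    have hdiv : ContinuousAt (fun y : ℝ => y / t) (t * x) := (continuous_id.div_const t).continuousAt
    have hφ' : ContinuousAt φ ((fun y : ℝ => y / t) (t * x)) := by
      simpa [hxx] using hcx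
    have h1 : ContinuousAt (fun y : ℝ => (y / t, φ (y / t))) (t * x) :=
      hdiv.prodMk (ContinuousAt.comp (g := φ) (f := fun y : ℝ => y / t) hφ' hdiv)
    have h2 : ContinuousAt (fun y : ℝ => g t (y / t) (φ (y / t))) (t * x) := by
      have hgc' : ContinuousAt (fun p : ℝ × ℝ => g t p.1 p.2)
          ((fun y : ℝ => (y / t, φ (y / t))) (t * x)) := by
        simpa [hxx] using hgc
      exact ContinuousAt.comp (g := fun p : ℝ × ℝ => g t p.1 p.2)
        (f := fun y : ℝ => (y / t, φ (y / t))) hgc' h1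
    have hW : {y : ℝ | y ∈ I ∧ y / t ∈ I} ∈ 𝓝 (t * x) := by
      have hop : IsOpen {y : ℝ | y ∈ I ∧ y / t ∈ I} := by
        have heq : {y : ℝ | y ∈ I ∧ y / t ∈ I} = I ∩ (fun y : ℝ => y / t) ⁻¹' I := rfl
        rw [heq]
        exact hIo.inter ((continuous_id.div_const t).isOpen_preimage I hIo)
      exact hop.mem_nhds ⟨htx, by rwa [hxx]⟩
    refine h2.congr (Filter.eventuallyEq_of_mem hW fun y hy => ?_)
    have hy2 : t * (y / t) = y := by field_simp
    have heq := hφeq t ht (y / t) hy.2 (by rw [hy2]; exact hy.1)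
    rw [hy2] at heq
    exact heq.symm
  -- one-step propagation of Ω
  have hstep : ∀ t ∈ Tstar T, ∀ x ∈ Ω, t * x ∈ I → t * x ∈ Ω := by
    intro t ht x hxΩ htx
    obtain ⟨V, hVo, hxV, hVI, hVc⟩ := hxΩ
    have htne : t ≠ 0 := ne_of_gt (htpos t ht)
    refine ⟨I ∩ (fun y : ℝ => y / t) ⁻¹' V,
      hIo.inter ((continuous_id.div_const t).isOpen_preimage V hVo),
      ⟨htx, by simp only [mem_preimage]; rwa [mul_div_cancel_left₀ x htne]⟩,
      inter_subset_left, ?_⟩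
    rintro y ⟨hyI, hyV⟩
    have hy2 : t * (y / t) = y := by field_simp
    have := hL1 t ht (y / t) (hVI hyV) (hVc _ hyV) (by rw [hy2]; exact hyI)
    rwa [hy2] at this
  -- chain lemma
  have hchain : ∀ (n : ℕ) (t : Fin n → ℝ), (∀ i, t i ∈ Tstar T) → ∀ x : ℝ,
      (∀ k : Fin n, (∏ i ∈ Finset.univ.filter (· ≤ k), t i) * x ∈ I) →
      (x ∈ Ω → (∏ i, t i) * x ∈ Ω) ∧ (x ∈ I → (∏ i, t i) * x ∈ Ω → x ∈ Ω) := by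
    intro n t htT x hpart
    set t' : ℕ → ℝ := fun j => if h : j < n then t ⟨j, h⟩ else 1 with ht'
    have ht'T : ∀ m, m < n → t' m ∈ Tstar T := by
      intro m hm; simp only [ht', dif_pos hm]; exact htT _
    have ht'ne : ∀ m, m < n → t' m ≠ 0 := fun m hm => ne_of_gt (htpos _ (ht'T m hm))
    have hFeq : ∀ (m : ℕ) (hm : m < n),
        (∏ i ∈ Finset.univ.filter (· ≤ (⟨m, hm⟩ : Fin n)), t i) = ∏ i ∈ Finset.range (m+1), t' i := by
      intro m hm
      refine Finset.prod_bij (fun (a : Fin n) (_ : a ∈ Finset.univ.filter (· ≤ (⟨m, hm⟩ : Fin n))) => a.val)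
        ?_ ?_ ?_ ?_
      · intro a ha
        simp only [Finset.mem_filter, Finset.mem_univ, true_and, Fin.le_def] at ha
        simp; omega
      · intro a _ b _ hab; exact Fin.val_injective hab
      · intro j hj
        simp only [Finset.mem_range] at hj
        have hjn : j < n := by omega
        refine ⟨⟨j, hjn⟩, ?_, rfl⟩
        simp [Fin.le_def]; omega
      · intro a _
        simp only [ht']
        rw [dif_pos a.isLt]
    have hFull : ∏ i ∈ Finset.range n, t' i = ∏ i, t i := by
      rw [← Fin.prod_univ_eq_prod_range (fun j => t' j) n]
      refine Finset.prod_congr rfl fun i _ => ?_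
      simp only [ht']
      rw [dif_pos i.isLt]
    have hsucc : ∀ m, t' m * ((∏ i ∈ Finset.range m, t' i) * x) = (∏ i ∈ Finset.range (m+1), t' i) * x := by
      intro m; rw [Finset.prod_range_succ]; ring
    constructor
    · intro hx
      have main : ∀ m, m ≤ n → (∏ i ∈ Finset.range m, t' i) * x ∈ Ω := by
        intro m
        induction m with
        | zero => intro _; simpa using hx
        | succ m ih =>
          intro hm
          have hmn : m < n := hm
          have hin : (∏ i ∈ Finset.range (m+1), t' i) * x ∈ I := by
            rw [← hFeq m hmn]; exact hpart ⟨m, hmn⟩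
          have := hstep (t' m) (ht'T m hmn) _ (ih (le_of_lt hmn)) (by rw [hsucc]; exact hin)
          rwa [hsucc] at this
      have := main n le_rfl
      rwa [hFull] at this
    · intro hxI hz
      have hIpt : ∀ m, m ≤ n → (∏ i ∈ Finset.range m, t' i) * x ∈ I := by
        intro m hm
        match m, hm with
        | 0, _ => simpa using hxI
        | (m'+1), hm =>
          have := hpart ⟨m', by omega⟩
          rwa [hFeq m' (by omega)] at this
      have main : ∀ j, j ≤ n → (∏ i ∈ Finset.range (n - j), t' i) * x ∈ Ω := by
        intro j
        induction j with
        | zero => intro _; simpa [hFull] using hz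
        | succ j ih =>
          intro hj
          have hj' : j ≤ n := by omega
          have hm1 : (n - (j+1)) + 1 = n - j := by omega
          have hmn : n - (j+1) < n := by omega
          set m := n - (j+1) with hmdef
          have hprev : (∏ i ∈ Finset.range (m+1), t' i) * x ∈ Ω := by
            rw [hm1]; exact ih hj'
          have key : (t' m)⁻¹ * ((∏ i ∈ Finset.range (m+1), t' i) * x) = (∏ i ∈ Finset.range m, t' i) * x := by
            rw [← hsucc m, ← mul_assoc, inv_mul_cancel₀ (ht'ne m hmn), one_mul]
          have := hstep ((t' m)⁻¹) (hinv _ (ht'T m hmn)) _ hprev (by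
            rw [key]; exact hIpt m (by omega))
          rwa [key] at this
      have := main n le_rfl
      simpa using this
  -- the core
  set core : Set ℝ := {x : ℝ | x ∈ I ∧ (∃ u ∈ I, u < γm * x) ∧ (∃ v ∈ I, γp * x < v)}
    with hcoredef
  have hcoreIcc : ∀ x ∈ core, Icc (γm * x) (γp * x) ⊆ I := by
    rintro x ⟨hxI, ⟨u, huI, hu⟩, ⟨v, hvI, hv⟩⟩ p hp
    exact hIint.out huI hvI ⟨le_of_lt (lt_of_lt_of_le hu hp.1), le_of_lt (lt_of_le_of_lt hp.2 hv)⟩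
  have hcoreI : core ⊆ I := fun x hx => hx.1
  have hcoreopen : IsOpen core := by
    refine isOpen_iff_forall_mem_open.mpr ?_
    rintro x ⟨hxI, ⟨u, huI, hu⟩, ⟨v, hvI, hv⟩⟩
    refine ⟨I ∩ (fun y : ℝ => γm * y) ⁻¹' Ioi u ∩ (fun y : ℝ => γp * y) ⁻¹' Iio v, ?_, ?_, ?_⟩
    · rintro y ⟨⟨hyI, hy1⟩, hy2⟩
      exact ⟨hyI, ⟨u, huI, hy1⟩, ⟨v, hvI, hy2⟩⟩
    · exact ((hIo.inter ((continuous_const.mul continuous_id).isOpen_preimage _ isOpen_Ioi)).inter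
        ((continuous_const.mul continuous_id).isOpen_preimage _ isOpen_Iio))
    · exact ⟨⟨hxI, hu⟩, hv⟩
  have hcoreOrd : core.OrdConnected := by
    constructor
    rintro x₁ ⟨hx₁I, ⟨u, huI, hu⟩, _⟩ x₂ ⟨hx₂I, _, ⟨v, hvI, hv⟩⟩ p hp
    refine ⟨hIint.out hx₁I hx₂I hp, ⟨u, huI, ?_⟩, ⟨v, hvI, ?_⟩⟩
    · exact lt_of_lt_of_le hu (mul_le_mul_of_nonneg_left hp.1 (le_of_lt hγm0))
    · exact lt_of_le_of_lt (mul_le_mul_of_nonneg_left hp.2 (le_of_lt hγp0)) hv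
  -- picking a product element close to a target ratio
  have hpick : ∀ (O : Set ℝ), IsOpen O → ∀ x ∈ O, 0 < x → ∀ z : ℝ, 0 < z → γm * x < z → z < γp * x →
      ∃ s ∈ TProd T γm γp, z / s ∈ O := by
    intro O hOo x hxO hx0 z hz0 h1 h2
    have hρm : γm < z / x := (lt_div_iff₀ hx0).mpr h1
    have hρp : z / x < γp := (div_lt_iff₀ hx0).mpr (by linarith)
    have hρcl : z / x ∈ closure (TProd T γm γp) := hdense ⟨le_of_lt hρm, le_of_lt hρp⟩
    have hxval : z / (z / x) = x := by
      field_simp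
    set N := {s : ℝ | 0 < s ∧ z / s ∈ O} with hNdef
    have hNo : IsOpen N := by
      rw [isOpen_iff_mem_nhds]
      rintro s ⟨hs0, hsO⟩
      have hc : ContinuousAt (fun s : ℝ => z / s) s :=
        continuousAt_const.div continuousAt_id (ne_of_gt hs0)
      have h1' : ∀ᶠ y in 𝓝 s, z / y ∈ O := hc.eventually_mem (hOo.mem_nhds hsO)
      have h2' : ∀ᶠ y in 𝓝 s, 0 < y := eventually_gt_nhds hs0
      filter_upwards [h1', h2'] with y hy1 hy2
      exact ⟨hy2, hy1⟩
    have hρN : z / x ∈ N := ⟨by positivity, by rw [hxval]; exact hxO⟩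
    obtain ⟨s, hsN, hsT⟩ := mem_closure_iff.mp hρcl N hNo hρN
    exact ⟨s, hsT, hsN.2⟩
  -- main reach lemma (forward) and seed lemma (backward)
  have hunpack : ∀ s ∈ TProd T γm γp, ∃ n : ℕ, ∃ t : Fin n → ℝ, (∀ i, t i ∈ Tstar T) ∧
      s = ∏ i, t i ∧ (∀ k : Fin n, (∏ i ∈ Finset.univ.filter (· ≤ k), t i) ∈ Icc γm γp) ∧
      s ∈ Icc γm γp := by
    intro s hs
    rw [TProd, mem_iUnion₂] at hs
    obtain ⟨n, hn, hsN⟩ := hs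
    have hn' : 1 ≤ n := hn
    obtain ⟨t, htT, hseq, hpart⟩ := hsN
    obtain ⟨m, rfl⟩ : ∃ m, n = m + 1 := ⟨n - 1, by omega⟩
    have huniv : Finset.univ.filter (· ≤ Fin.last m) = (Finset.univ : Finset (Fin (m+1))) :=
      Finset.filter_true_of_mem (fun i _ => Fin.le_last i)
    have hsIcc : s ∈ Icc γm γp := by
      have := hpart (Fin.last m)
      rwa [huniv, ← hseq] at this
    exact ⟨m + 1, t, htT, hseq, hpart, hsIcc⟩
  have hreach : ∀ x ∈ core, x ∈ Ω → ∀ z ∈ I, γm * x < z → z < γp * x → z ∈ Ω := by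
    intro x hxc hxΩ z hzI h1 h2
    have hx0 : 0 < x := hI (hcoreI hxc)
    have hz0 : 0 < z := hI hzI
    obtain ⟨s, hsT, hs2⟩ := hpick (Ω ∩ core) (hΩopen.inter hcoreopen) x ⟨hxΩ, hxc⟩ hx0 z hz0 h1 h2
    obtain ⟨n, t, htT, hseq, hpart, hsIcc⟩ := hunpack s hsT
    have hs0 : 0 < s := lt_of_lt_of_le hγm0 hsIcc.1
    have hx'0 : 0 < z / s := by positivity
    have hx'c : z / s ∈ core := hs2.2
    have hx'Ω : z / s ∈ Ω := hs2.1
    have hzx' : s * (z / s) = z := by field_simp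
    have hpart' : ∀ k : Fin n, (∏ i ∈ Finset.univ.filter (· ≤ k), t i) * (z / s) ∈ I := by
      intro k
      refine hcoreIcc _ hx'c ⟨?_, ?_⟩
      · exact mul_le_mul_of_nonneg_right (hpart k).1 (le_of_lt hx'0)
      · exact mul_le_mul_of_nonneg_right (hpart k).2 (le_of_lt hx'0)
    have := (hchain n t htT (z / s) hpart').1 hx'Ω
    rwa [← hseq, hzx'] at this
  have hseed' : ∀ x ∈ core, ∀ z : ℝ, z ∈ Ω → 0 < z → γm * x < z → z < γp * x →
      (Ω ∩ core).Nonempty := by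
    intro x hxc z hzΩ hz0 h1 h2
    have hx0 : 0 < x := hI (hcoreI hxc)
    obtain ⟨s, hsT, hs2⟩ := hpick core hcoreopen x hxc hx0 z hz0 h1 h2
    obtain ⟨n, t, htT, hseq, hpart, hsIcc⟩ := hunpack s hsT
    have hs0 : 0 < s := lt_of_lt_of_le hγm0 hsIcc.1
    have hx'0 : 0 < z / s := by positivity
    have hx'c : z / s ∈ core := hs2
    have hzx' : s * (z / s) = z := by field_simp
    have hpart' : ∀ k : Fin n, (∏ i ∈ Finset.univ.filter (· ≤ k), t i) * (z / s) ∈ I := by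
      intro k
      refine hcoreIcc _ hx'c ⟨?_, ?_⟩
      · exact mul_le_mul_of_nonneg_right (hpart k).1 (le_of_lt hx'0)
      · exact mul_le_mul_of_nonneg_right (hpart k).2 (le_of_lt hx'0)
    have hfin : (∏ i, t i) * (z / s) ∈ Ω := by
      rw [← hseq, hzx']; exact hzΩ
    have := (hchain n t htT (z / s) hpart').2 (hcoreI hx'c) hfin
    exact ⟨z / s, this, hx'c⟩
  -- open neighbors within I
  have hnbr : ∀ z ∈ I, (∃ u ∈ I, u < z) ∧ (∃ v ∈ I, z < v) := by
    intro z hz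
    obtain ⟨ε, hε, hball⟩ := Metric.isOpen_iff.mp hIo z hz
    rw [Real.ball_eq_Ioo] at hball
    constructor
    · exact ⟨z - ε/2, hball ⟨by linarith, by linarith⟩, by linarith⟩
    · exact ⟨z + ε/2, hball ⟨by linarith, by linarith⟩, by linarith⟩
  -- coverage lemma
  have hcover : ∀ z ∈ I, ∃ x ∈ core, γm * x < z ∧ z < γp * x := by
    intro z hz
    obtain ⟨u₀, hu₀I, v₀, hv₀I, hf⟩ := hfact
    obtain ⟨⟨u', hu'I, hu'z⟩, ⟨v', hv'I, hzv'⟩⟩ := hnbr z hz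
    have huI : min u' u₀ ∈ I := by
      rcases min_choice u' u₀ with h | h <;> rw [h] <;> assumption
    have hvI : max v' v₀ ∈ I := by
      rcases max_choice v' v₀ with h | h <;> rw [h] <;> assumption
    set u := min u' u₀ with hudef
    set v := max v' v₀ with hvdef
    have hu0 : 0 < u := hI huI
    have hv0 : 0 < v := hI hvI
    have hz0 : 0 < z := hI hz
    have huz : u < z := lt_of_le_of_lt (min_le_left _ _) hu'z
    have hzv : z < v := lt_of_lt_of_le hzv' (le_max_left _ _)
    have huv : γp * u < γm * v := by
      have h1 : u ≤ u₀ := min_le_right _ _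
      have h2 : v₀ ≤ v := le_max_right _ _
      nlinarith
    have hlt : max (z / γp) (u / γm) < min (z / γm) (v / γp) := by
      refine max_lt (lt_min ?_ ?_) (lt_min ?_ ?_)
      · rw [div_lt_div_iff₀ hγp0 hγm0]; nlinarith
      · rw [div_lt_div_iff₀ hγp0 hγp0]; nlinarith
      · rw [div_lt_div_iff₀ hγm0 hγm0]; nlinarith
      · rw [div_lt_div_iff₀ hγm0 hγp0]; nlinarith
    obtain ⟨x, hx1, hx2⟩ := exists_between hlt
    have hxzp : z / γp < x := lt_of_le_of_lt (le_max_left _ _) hx1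
    have hxum : u / γm < x := lt_of_le_of_lt (le_max_right _ _) hx1
    have hxzm : x < z / γm := lt_of_lt_of_le hx2 (min_le_left _ _)
    have hxvp : x < v / γp := lt_of_lt_of_le hx2 (min_le_right _ _)
    have hx0 : 0 < x := lt_trans (by positivity) hxum
    have hugm : u < γm * x := by rw [div_lt_iff₀ hγm0] at hxum; linarith
    have hgpv : γp * x < v := by rw [lt_div_iff₀ hγp0] at hxvp; linarith
    have hxI : x ∈ I := by
      refine hIint.out huI hvI ⟨?_, ?_⟩
      · nlinarith
      · nlinarith
    refine ⟨x, ⟨hxI, ⟨u, huI, hugm⟩, ⟨v, hvI, hgpv⟩⟩, ?_, ?_⟩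
    · rw [lt_div_iff₀ hγm0] at hxzm
      linarith
    · rw [div_lt_iff₀ hγp0] at hxzp
      linarith
  -- the seed: some point of Ω
  have hseedΩ : ∃ z₀, z₀ ∈ Ω := by
    obtain ⟨a, ha, b, hb, hab⟩ := hUnt
    rcases lt_or_gt_of_ne hab with h | h
    case _ =>
      have hVU : Ioo a b ⊆ U := fun y hy => hUint.out ha hb ⟨le_of_lt hy.1, le_of_lt hy.2⟩
      refine ⟨(a + b) / 2, Ioo a b, isOpen_Ioo, ⟨by linarith, by linarith⟩, fun y hy => hU (hVU hy), ?_⟩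
      intro y hy
      exact hcont.continuousAt (mem_nhds_iff.mpr ⟨Ioo a b, hVU, isOpen_Ioo, hy⟩)
    case _ =>
      have hVU : Ioo b a ⊆ U := fun y hy => hUint.out hb ha ⟨le_of_lt hy.1, le_of_lt hy.2⟩
      refine ⟨(b + a) / 2, Ioo b a, isOpen_Ioo, ⟨by linarith, by linarith⟩, fun y hy => hU (hVU hy), ?_⟩
      intro y hy
      exact hcont.continuousAt (mem_nhds_iff.mpr ⟨Ioo b a, hVU, isOpen_Ioo, hy⟩)
  -- Ω ∩ core is nonempty
  have hΩcore : (Ω ∩ core).Nonempty := by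
    obtain ⟨z₀, hz₀⟩ := hseedΩ
    have hz₀I : z₀ ∈ I := hΩI hz₀
    obtain ⟨x, hxc, h1, h2⟩ := hcover z₀ hz₀I
    exact hseed' x hxc z₀ hz₀ (hI hz₀I) h1 h2
  -- relative closedness of Ω in core
  have hclosed : ∀ w ∈ core, w ∈ closure Ω → w ∈ Ω := by
    intro w hwc hwcl
    have hw0 : 0 < w := hI (hcoreI hwc)
    have hwIoo : w ∈ Ioo (w / γp) (w / γm) := by
      constructor
      · rw [div_lt_iff₀ hγp0]; nlinarith
      · rw [lt_div_iff₀ hγm0]; nlinarith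
    have hO : IsOpen (core ∩ Ioo (w / γp) (w / γm)) := hcoreopen.inter isOpen_Ioo
    obtain ⟨x, hxO, hxΩ⟩ := mem_closure_iff.mp hwcl _ hO ⟨hwc, hwIoo⟩
    have h1 : γm * x < w := by
      have := hxO.2.2
      rw [lt_div_iff₀ hγm0] at this
      linarith
    have h2 : w < γp * x := by
      have := hxO.2.1
      rw [div_lt_iff₀ hγp0] at this
      linarith
    exact hreach x hxO.1 hxΩ w (hcoreI hwc) h1 h2
  -- core ⊆ Ω by preconnectedness
  have hcoreΩ : core ⊆ Ω := by
    by_contra h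
    rw [not_subset] at h
    obtain ⟨w, hwc, hwΩ⟩ := h
    have hpc : IsPreconnected core := hcoreOrd.isPreconnected
    have hcov : core ⊆ Ω ∪ (closure Ω)ᶜ := by
      intro y hy
      by_cases hycl : y ∈ closure Ω
      · exact Or.inl (hclosed y hy hycl)
      · exact Or.inr hycl
    have hne1 : (core ∩ Ω).Nonempty := by
      obtain ⟨p, hpΩ, hpc'⟩ := hΩcore
      exact ⟨p, hpc', hpΩ⟩
    have hne2 : (core ∩ (closure Ω)ᶜ).Nonempty := by
      refine ⟨w, hwc, fun hwcl => hwΩ (hclosed w hwc hwcl)⟩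
    obtain ⟨y, _, hyΩ, hyncl⟩ := hpc Ω (closure Ω)ᶜ hΩopen (isClosed_closure.isOpen_compl)
      hcov hne1 hne2
    exact hyncl (subset_closure hyΩ)
  -- conclusion
  intro z hz
  obtain ⟨x, hxc, h1, h2⟩ := hcover z hz
  have hzΩ : z ∈ Ω := hreach x hxc (hcoreΩ hxc) z hz h1 h2
  exact (hΩat z hzΩ).continuousWithinAt
end
end

section
/- Let T ⊆ (0,∞) be nonempty and I ⊆ (0,∞) an interval with sup I / inf I > R_T. If φ : I → ℝ satisfies φ(tx) = φ(x) for all t ∈ T and x ∈ I ∩ t⁻¹I, and φ is continuous on some nontrivial subinterval of I, then φ is constant on I. -/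
open Set Filter Topology Pointwise

noncomputable section

/-!
Fix a window `[γ₋, γ₊]` with `T_{γ₋,γ₊}` dense in it and `γ₊/γ₋ < sup I / inf I`, and call `c`
a center when `[γ₋ c, γ₊ c] ⊆ I`. Applying the invariance along the partial products gives
`φ (s c) = φ c` for every `s ∈ T_{γ₋,γ₊}`, and these points `s c` are dense in `[γ₋ c, γ₊ c]`.
Hence if `φ = b` near some point of `[γ₋ c, γ₊ c]`, then `φ c = b`. Starting from a point where
`φ` is continuous, this spreads local constancy over the connected set of centers lying strictly
inside `I`. Every interior point of `I` has the form `s c` for such a center; the endpoints of `I`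
are reached with one more factor `τ ∈ T*` with `γ₋/γ₊ ≤ τ < 1`.
-/

lemma eSup_div_eInf_le_ofReal {I : Set ℝ} {k : ℝ} (hk : 0 < k)
    (h : ∀ a ∈ I, ∀ b ∈ I, b ≤ k * a) : eSup I / eInf I ≤ ENNReal.ofReal k := by
  refine ENNReal.div_le_of_le_mul (iSup₂_le fun b hb => ?_)
  calc ENNReal.ofReal b = ENNReal.ofReal k * ENNReal.ofReal (b / k) := by
        rw [← ENNReal.ofReal_mul hk.le, mul_div_cancel₀ b hk.ne']
    _ ≤ ENNReal.ofReal k * eInf I := by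
        gcongr
        exact le_iInf₂ fun a ha => ENNReal.ofReal_le_ofReal ((div_le_iff₀' hk).2 (h a ha b hb))

lemma exists_mul_lt_mul_of_ofReal_div_lt {I : Set ℝ} {γm γp : ℝ} (hγm : 0 < γm) (hγp : 0 < γp)
    (h : ENNReal.ofReal (γp / γm) < eSup I / eInf I) : ∃ a ∈ I, ∃ b ∈ I, γp * a < γm * b := by
  by_contra! hle
  refine h.not_ge (eSup_div_eInf_le_ofReal (div_pos hγp hγm) fun a ha b hb => ?_)
  rw [div_mul_eq_mul_div, le_div_iff₀ hγm]
  linarith [hle a ha b hb]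

lemma exists_eventually_continuousAt {U : Set ℝ} {φ : ℝ → ℝ} (hU : U.OrdConnected)
    (hne : ∃ a ∈ U, ∃ b ∈ U, a ≠ b) (hφ : ContinuousOn φ U) :
    ∃ a ∈ U, ∃ b ∈ U, ∃ z, a < z ∧ z < b ∧ ∀ᶠ w in 𝓝 z, ContinuousAt φ w := by
  obtain ⟨a, ha, b, hb, hab⟩ := hne
  wlog h : a < b generalizing a b
  · exact this b hb a ha hab.symm (hab.lt_or_gt.resolve_left h)
  refine ⟨a, ha, b, hb, (a + b) / 2, by linarith, by linarith, ?_⟩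
  filter_upwards [Ioo_mem_nhds (show a < (a + b) / 2 by linarith)
    (show (a + b) / 2 < b by linarith)] with w hw
  exact hφ.continuousAt (mem_of_superset (Ioo_mem_nhds hw.1 hw.2)
    (Ioo_subset_Icc_self.trans (hU.out ha hb)))

lemma eventually_lt_mul_and_mul_lt {a b u v c : ℝ} (ha : a < u * c) (hb : v * c < b) :
    ∀ᶠ c' in 𝓝 c, a < u * c' ∧ v * c' < b :=
  ((continuous_const_mul u).continuousAt.eventually (lt_mem_nhds ha)).and
    ((continuous_const_mul v).continuousAt.eventually (gt_mem_nhds hb))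

lemma exists_lt_mul_and_mul_lt {γm γp A B y : ℝ} (hγm : 0 < γm) (hγ : γm < γp) (hy : 0 < y)
    (hAy : A < y) (hyB : y < B) (hAB : γp * A < γm * B) :
    ∃ c, (A < γm * c ∧ γp * c < B) ∧ γm * c < y ∧ y < γp * c := by
  have hγp : 0 < γp := hγm.trans hγ
  obtain ⟨c, hlo, hhi⟩ := exists_between (max_lt
    (lt_min ((div_lt_div_iff₀ hγm hγp).2 (by linarith)) (div_lt_div_of_pos_right hAy hγm))
    (lt_min (div_lt_div_of_pos_right hyB hγp) (div_lt_div_of_pos_left hy hγm hγ)))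
  rw [max_lt_iff, div_lt_iff₀' hγm, div_lt_iff₀' hγp] at hlo
  rw [lt_min_iff, lt_div_iff₀' hγp, lt_div_iff₀' hγm] at hhi
  exact ⟨c, ⟨hlo.1, hhi.1⟩, hhi.2, hlo.2⟩

lemma div_mem_Icc_of_mem_Icc {γm γp c w : ℝ} (hc : 0 < c) (hw : w ∈ Icc (γm * c) (γp * c)) :
    w / c ∈ Icc γm γp :=
  ⟨(le_div_iff₀ hc).2 hw.1, (div_le_iff₀ hc).2 hw.2⟩

section
variable {T I : Set ℝ} {φ : ℝ → ℝ} {γm γp : ℝ}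

lemma apply_mul_of_mem_Tstar (hT0 : T ⊆ Ioi 0)
    (hφ : ∀ t ∈ T, ∀ x ∈ I, t * x ∈ I → φ (t * x) = φ x) :
    ∀ t ∈ Tstar T, ∀ y ∈ I, t * y ∈ I → φ (t * y) = φ y := by
  rintro t ((ht | ⟨u, hu, rfl⟩) | rfl) y hy hty
  · exact hφ t ht y hy hty
  · have hu0 : u ≠ 0 := (hT0 hu).ne'
    have h := hφ u hu _ hty (by rwa [mul_inv_cancel_left₀ hu0])
    rwa [mul_inv_cancel_left₀ hu0, eq_comm] at h
  · rw [one_mul]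

lemma eq_one_of_mem_TProdN_zero {x : ℝ} (hx : x ∈ TProdN T γm γp 0) : x = 1 := by
  obtain ⟨t, -, rfl, -⟩ := hx
  simp

lemma exists_of_mem_TProdN_succ {n : ℕ} {x : ℝ} (hx : x ∈ TProdN T γm γp (n + 1)) :
    ∃ y ∈ TProdN T γm γp n, ∃ t ∈ Tstar T, x = y * t ∧ x ∈ Icc γm γp := by
  obtain ⟨t, ht, rfl, hpart⟩ := hx
  refine ⟨∏ i : Fin n, t i.castSucc, ⟨fun i => t i.castSucc, fun i => ht _, rfl, fun k => ?_⟩,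
    t (Fin.last n), ht _, Fin.prod_univ_castSucc t, ?_⟩
  · simpa [Finset.prod_filter, Fin.prod_univ_castSucc, (Fin.castSucc_lt_last k).not_ge]
      using hpart k.castSucc
  · simpa [Fin.le_last] using hpart (Fin.last n)

lemma mem_Icc_of_mem_TProdN (hγm : γm ≤ 1) (hγp : 1 ≤ γp) {n : ℕ} {x : ℝ}
    (hx : x ∈ TProdN T γm γp n) : x ∈ Icc γm γp := by
  cases n with
  | zero => rw [eq_one_of_mem_TProdN_zero hx]; exact ⟨hγm, hγp⟩
  | succ n =>
    obtain ⟨-, -, -, -, -, hx⟩ := exists_of_mem_TProdN_succ hx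
    exact hx

lemma exists_mem_TProdN_of_mem_TProd {s : ℝ} (hs : s ∈ TProd T γm γp) :
    ∃ n, s ∈ TProdN T γm γp n := by
  simp only [TProd, mem_iUnion] at hs
  obtain ⟨n, -, hs⟩ := hs
  exact ⟨n, hs⟩

lemma apply_mul_of_mem_TProdN (hγm : γm ≤ 1) (hγp : 1 ≤ γp)
    (hφ : ∀ t ∈ Tstar T, ∀ y ∈ I, t * y ∈ I → φ (t * y) = φ y)
    {c : ℝ} (hc : 0 ≤ c) (hcI : Icc (γm * c) (γp * c) ⊆ I) :
    ∀ {n : ℕ} {x : ℝ}, x ∈ TProdN T γm γp n → φ (x * c) = φ c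
  | 0, x, hx => by rw [eq_one_of_mem_TProdN_zero hx, one_mul]
  | n + 1, _, hx => by
    obtain ⟨y, hy, t, ht, rfl, hyt⟩ := exists_of_mem_TProdN_succ hx
    have hmem : ∀ z ∈ Icc γm γp, z * c ∈ I := fun z hz =>
      hcI ⟨mul_le_mul_of_nonneg_right hz.1 hc, mul_le_mul_of_nonneg_right hz.2 hc⟩
    have hyc := hmem y (mem_Icc_of_mem_TProdN hγm hγp hy)
    have hytc := hmem _ hyt
    rw [mul_comm y t, mul_assoc] at hytc ⊢
    rw [hφ t ht _ hyc hytc]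
    exact apply_mul_of_mem_TProdN hγm hγp hφ hc hcI hy

lemma apply_mul_of_mem_TProd (hγm : γm ≤ 1) (hγp : 1 ≤ γp)
    (hφ : ∀ t ∈ Tstar T, ∀ y ∈ I, t * y ∈ I → φ (t * y) = φ y)
    {c : ℝ} (hc : 0 ≤ c) (hcI : Icc (γm * c) (γp * c) ⊆ I) {s : ℝ} (hs : s ∈ TProd T γm γp) :
    φ (s * c) = φ c :=
  have ⟨_, hs⟩ := exists_mem_TProdN_of_mem_TProd hs
  apply_mul_of_mem_TProdN hγm hγp hφ hc hcI hs

-- The first factor that decreases a partial product lies in `[γ₋/γ₊, 1)`.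
lemma exists_mem_Tstar_of_mem_TProdN_lt_one (hγm0 : 0 < γm) (hγm : γm ≤ 1) (hγp : 1 ≤ γp) :
    ∀ {n : ℕ} {x : ℝ}, x ∈ TProdN T γm γp n → x < 1 → ∃ τ ∈ Tstar T, γm ≤ τ * γp ∧ τ < 1
  | 0, x, hx, hx1 => by rw [eq_one_of_mem_TProdN_zero hx] at hx1; exact absurd hx1 (lt_irrefl 1)
  | n + 1, _, hx, hx1 => by
    obtain ⟨y, hy, t, ht, rfl, hyt⟩ := exists_of_mem_TProdN_succ hx
    have hy' := mem_Icc_of_mem_TProdN hγm hγp hy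
    have hy0 : 0 < y := hγm0.trans_le hy'.1
    by_cases ht1 : t < 1
    · have ht0 : 0 < t := pos_of_mul_pos_right (hγm0.trans_le hyt.1) hy0.le
      exact ⟨t, ht, by nlinarith [hyt.1, hy'.2], ht1⟩
    · exact exists_mem_Tstar_of_mem_TProdN_lt_one hγm0 hγm hγp hy (by nlinarith)

lemma exists_mem_Tstar_lt_one (hd : DenseInIcc T γm γp) (hγm0 : 0 < γm) (hγm1 : γm < 1)
    (hγp : 1 ≤ γp) : ∃ τ ∈ Tstar T, γm ≤ τ * γp ∧ τ < 1 := by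
  obtain ⟨x, hx1, hx⟩ :=
    mem_closure_iff_nhds.1 (hd ⟨le_rfl, hγm1.le.trans hγp⟩) _ (Iio_mem_nhds hγm1)
  obtain ⟨n, hx⟩ := exists_mem_TProdN_of_mem_TProd hx
  exact exists_mem_Tstar_of_mem_TProdN_lt_one hγm0 hγm1.le hγp hx hx1

lemma exists_mem_TProd_of_mem_nhds (hd : DenseInIcc T γm γp) {x : ℝ} (hx : x ∈ Icc γm γp)
    {f : ℝ → ℝ} (hf : ContinuousAt f x) {V : Set ℝ} (hV : V ∈ 𝓝 (f x)) :
    ∃ s ∈ TProd T γm γp, f s ∈ V :=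
  ((mem_closure_iff_frequently.1 (hd hx)).and_eventually (hf hV)).exists

lemma of_eventually_nhds_of_mem_Icc (hd : DenseInIcc T γm γp) (hγm : γm ≤ 1) (hγp : 1 ≤ γp)
    (hφ : ∀ t ∈ Tstar T, ∀ y ∈ I, t * y ∈ I → φ (t * y) = φ y)
    {c w : ℝ} (hc : 0 < c) (hcI : Icc (γm * c) (γp * c) ⊆ I) (hw : w ∈ Icc (γm * c) (γp * c))
    {p : ℝ → Prop} (h : ∀ᶠ v in 𝓝 w, p (φ v)) : p (φ c) := by
  obtain ⟨s, hs, hps⟩ := exists_mem_TProd_of_mem_nhds hd (div_mem_Icc_of_mem_Icc hc hw)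
    (continuous_mul_const c).continuousAt (V := {v | p (φ v)})
    (by rwa [div_mul_cancel₀ w hc.ne'])
  rwa [← apply_mul_of_mem_TProd hγm hγp hφ hc.le hcI hs]

lemma apply_eq_of_eventually_eq (hd : DenseInIcc T γm γp) (hγm0 : 0 < γm) (hγm : γm ≤ 1)
    (hγp : 1 ≤ γp) (hφ : ∀ t ∈ Tstar T, ∀ y ∈ I, t * y ∈ I → φ (t * y) = φ y)
    {b c y : ℝ} (hc : 0 < c) (hy : y ∈ Icc (γm * c) (γp * c))
    (h : ∀ᶠ c' in 𝓝 c, 0 < c' ∧ Icc (γm * c') (γp * c') ⊆ I ∧ φ c' = b) : φ y = b := by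
  have hy0 : 0 < y := (mul_pos hγm0 hc).trans_le hy.1
  obtain ⟨s, hs, hys, hysI, hysb⟩ := exists_mem_TProd_of_mem_nhds hd
    (div_mem_Icc_of_mem_Icc hc hy) (continuousAt_const.div continuousAt_id (div_pos hy0 hc).ne')
    (f := (y / ·)) (by rwa [div_div_cancel₀ hy0.ne'])
  have hs0 : s ≠ 0 := ((div_pos_iff_of_pos_left hy0).1 hys).ne'
  rw [← mul_div_cancel₀ y hs0, apply_mul_of_mem_TProd hγm hγp hφ hys.le hysI hs, hysb]

lemma eventually_apply_eq_of_continuousAt (hd : DenseInIcc T γm γp) (hγm : γm ≤ 1)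
    (hγp : 1 ≤ γp) (hφ : ∀ t ∈ Tstar T, ∀ y ∈ I, t * y ∈ I → φ (t * y) = φ y)
    {c z : ℝ} (hc : 0 < c) (hcI : Icc (γm * c) (γp * c) ⊆ I) (hcz : γm * c < z)
    (hzc : z < γp * c) (hcont : ∀ᶠ w in 𝓝 z, ContinuousAt φ w) :
    ∀ᶠ w in 𝓝 z, φ w = φ z := by
  have key : ∀ w ∈ Icc (γm * c) (γp * c), ContinuousAt φ w → φ w = φ c := fun w hw hcw => by
    by_contra hne
    exact of_eventually_nhds_of_mem_Icc hd hγm hγp hφ hc hcI hw (p := (· ≠ φ c))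
      (hcw.eventually_ne hne) rfl
  filter_upwards [hcont, Ioo_mem_nhds hcz hzc] with w hw hwc
  rw [key w (Ioo_subset_Icc_self hwc) hw, key z ⟨hcz.le, hzc.le⟩ hcont.self_of_nhds]

lemma apply_eq_of_mem_Ioo (hd : DenseInIcc T γm γp) (hγm0 : 0 < γm) (hγm1 : γm < 1)
    (hγp1 : 1 < γp) (hI0 : I ⊆ Ioi 0) (hI : I.OrdConnected)
    (hφ : ∀ t ∈ Tstar T, ∀ y ∈ I, t * y ∈ I → φ (t * y) = φ y)
    {A B z : ℝ} (hA : A ∈ I) (hB : B ∈ I) (hAB : γp * A < γm * B) (hAz : A < z) (hzB : z < B)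
    (hcont : ∀ᶠ w in 𝓝 z, ContinuousAt φ w) {y : ℝ} (hy : y ∈ Ioo A B) : φ y = φ z := by
  have hA0 : 0 < A := hI0 hA
  have hγ : γm < γp := hγm1.trans hγp1
  set G := {c | A < γm * c ∧ γp * c < B}
  have hG : ∀ c ∈ G, 0 < c ∧ Icc (γm * c) (γp * c) ⊆ I := fun c hc =>
    ⟨pos_of_mul_pos_right (hA0.trans hc.1) hγm0.le,
      (Icc_subset_Icc hc.1.le hc.2.le).trans (hI.out hA hB)⟩
  set u := {x | ∀ᶠ w in 𝓝 x, φ w = φ z}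
  have hspread : ∀ x ∈ u, ∀ c ∈ G, γm * c < x → x < γp * c → c ∈ u := by
    intro x hx c hcG hcx hxc
    filter_upwards [eventually_lt_mul_and_mul_lt hcG.1 hcG.2,
      eventually_lt_mul_and_mul_lt hxc hcx] with c' hc'G hc'x
    exact of_eventually_nhds_of_mem_Icc hd hγm1.le hγp1.le hφ (hG c' hc'G).1 (hG c' hc'G).2
      ⟨hc'x.2.le, hc'x.1.le⟩ (p := (· = φ z)) hx
  have hGu : G ⊆ u := by
    have hGconn : IsPreconnected G := OrdConnected.isPreconnected ⟨fun a ha b hb c hc =>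
      ⟨ha.1.trans_le (mul_le_mul_of_nonneg_left hc.1 hγm0.le),
        (mul_le_mul_of_nonneg_left hc.2 (hγm0.trans hγ).le).trans_lt hb.2⟩⟩
    refine hGconn.subset_of_closure_inter_subset isOpen_setOfPred_eventually_nhds ?_ ?_
    · obtain ⟨c, hcG, hcz, hzc⟩ := exists_lt_mul_and_mul_lt hγm0 hγ (hA0.trans hAz) hAz hzB hAB
      have hzu : z ∈ u := eventually_apply_eq_of_continuousAt hd hγm1.le hγp1.le hφ
        (hG c hcG).1 (hG c hcG).2 hcz hzc hcont
      exact ⟨c, hcG, hspread z hzu c hcG hcz hzc⟩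
    · rintro x ⟨hxu, hxG⟩
      have hx0 := (hG x hxG).1
      obtain ⟨x', hx'x, hx'u⟩ := mem_closure_iff_nhds.1 hxu _
        (Ioo_mem_nhds (mul_lt_of_lt_one_left hx0 hγm1) (lt_mul_of_one_lt_left hx0 hγp1))
      exact hspread x' hx'u x hxG hx'x.1 hx'x.2
  obtain ⟨c, hcG, hcy, hyc⟩ := exists_lt_mul_and_mul_lt hγm0 hγ (hA0.trans hy.1) hy.1 hy.2 hAB
  refine apply_eq_of_eventually_eq hd hγm0 hγm1.le hγp1.le hφ (hG c hcG).1 ⟨hcy.le, hyc.le⟩ ?_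
  filter_upwards [eventually_lt_mul_and_mul_lt hcG.1 hcG.2, hGu hcG] with c' hc'G hc'
  exact ⟨(hG c' hc'G).1, (hG c' hc'G).2, hc'⟩

lemma apply_eq_of_mem (hd : DenseInIcc T γm γp) (hγm0 : 0 < γm) (hγm1 : γm < 1)
    (hγp1 : 1 < γp) (hI0 : I ⊆ Ioi 0) (hI : I.OrdConnected)
    (hφ : ∀ t ∈ Tstar T, ∀ y ∈ I, t * y ∈ I → φ (t * y) = φ y)
    {A B z : ℝ} (hA : A ∈ I) (hB : B ∈ I) (hAB : γp * A < γm * B) (hAz : A < z) (hzB : z < B)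
    (hcont : ∀ᶠ w in 𝓝 z, ContinuousAt φ w) {x : ℝ} (hx : x ∈ I) : φ x = φ z := by
  obtain ⟨τ, hτ, hτγ, hτ1⟩ := exists_mem_Tstar_lt_one hd hγm0 hγm1 hγp1.le
  have hx0 : 0 < x := hI0 hx
  have hτ0 : 0 < τ := pos_of_mul_pos_left (hγm0.trans_le hτγ) (zero_le_one.trans hγp1.le)
  have hAτB : A < τ * B := by nlinarith [hI0 hB]
  rcases le_or_gt x A with hxA | hAx
  · have hy : x / τ ∈ Ioo x B :=
      ⟨(lt_div_iff₀ hτ0).2 (mul_lt_of_lt_one_right hx0 hτ1), (div_lt_iff₀' hτ0).2 (by linarith)⟩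
    have hτy : τ * (x / τ) = x := mul_div_cancel₀ x hτ0.ne'
    rw [← hτy, hφ τ hτ _ (hI.out hx hB (Ioo_subset_Icc_self hy)) (by rwa [hτy])]
    exact apply_eq_of_mem_Ioo hd hγm0 hγm1 hγp1 hI0 hI hφ hx hB (by nlinarith)
      (hxA.trans_lt hAz) hzB hcont hy
  rcases lt_or_ge x B with hxB | hBx
  · exact apply_eq_of_mem_Ioo hd hγm0 hγm1 hγp1 hI0 hI hφ hA hB hAB hAz hzB hcont ⟨hAx, hxB⟩
  · have hy : τ * x ∈ Ioo A x := ⟨by nlinarith, mul_lt_of_lt_one_left hx0 hτ1⟩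
    rw [← hφ τ hτ x hx (hI.out hA hx (Ioo_subset_Icc_self hy))]
    exact apply_eq_of_mem_Ioo hd hγm0 hγm1 hγp1 hI0 hI hφ hA hx (by nlinarith) hAz
      (hzB.trans_le hBx) hcont hy

end

theorem stmt17_general (T : Set ℝ) (hT0 : T ⊆ Ioi 0)
    (I : Set ℝ) (hI : I ⊆ Ioi 0) (hIint : I.OrdConnected)
    (hratio : limitRatio T < eSup I / eInf I)
    (φ : ℝ → ℝ)
    (hφeq : ∀ t ∈ T, ∀ x ∈ I, t * x ∈ I → φ (t * x) = φ x)
    (U : Set ℝ) (hU : U ⊆ I) (hUint : U.OrdConnected)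
    (hUnt : ∃ a ∈ U, ∃ b ∈ U, a ≠ b)
    (hcont : ContinuousOn φ U) :
    ∃ b : ℝ, ∀ x ∈ I, φ x = b := by
  rw [limitRatio, sInf_lt_iff] at hratio
  obtain ⟨_, ⟨γm, γp, ⟨hγm0, hγm1⟩, hγp1, hd, rfl⟩, hlt⟩ := hratio
  obtain ⟨A, hA, B, hB, hAB⟩ :=
    exists_mul_lt_mul_of_ofReal_div_lt hγm0 (zero_lt_one.trans hγp1) hlt
  obtain ⟨a, ha, b, hb, z, haz, hzb, hzcont⟩ := exists_eventually_continuousAt hUint hUnt hcont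
  have hAB' : γp * min A a < γm * max B b :=
    (mul_le_mul_of_nonneg_left (min_le_left A a) (zero_le_one.trans hγp1.le)).trans_lt
      (hAB.trans_le (mul_le_mul_of_nonneg_left (le_max_left B b) hγm0.le))
  exact ⟨φ z, fun x hx => apply_eq_of_mem hd hγm0 hγm1 hγp1 hI hIint
    (apply_mul_of_mem_Tstar hT0 hφeq) (min_rec' (· ∈ I) hA (hU ha))
    (max_rec' (· ∈ I) hB (hU hb)) hAB' ((min_le_right A a).trans_lt haz)
    (hzb.trans_le (le_max_right B b)) hzcont hx⟩

theorem stmt17 (T : Set ℝ) (hT : T.Nonempty) (hT0 : T ⊆ Ioi 0)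
    (I : Set ℝ) (hI : I ⊆ Ioi 0) (hIint : I.OrdConnected)
    (hratio : limitRatio T < eSup I / eInf I)
    (φ : ℝ → ℝ)
    (hφeq : ∀ t ∈ T, ∀ x ∈ I, t * x ∈ I → φ (t * x) = φ x)
    (U : Set ℝ) (hU : U ⊆ I) (hUint : U.OrdConnected)
    (hUnt : ∃ a ∈ U, ∃ b ∈ U, a ≠ b)
    (hcont : ContinuousOn φ U) :
    ∃ b : ℝ, ∀ x ∈ I, φ x = b :=
  stmt17_general T hT0 I hI hIint hratio φ hφeq U hU hUint hUnt hcont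
end
end
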